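/- arXiv:2006.04970 — 7 statements merged into one kernel-verified Lean document; each statement's English description precedes it below -/
import Mathlib

section
/- Let Y₁, Y₂ : [0,∞) → ℝ be continuous with Y₁(0) ≤ 0 and Y₂(0) ≤ 0, and let q₁ ≥ 0, q₂ ≥ 0 be constants with q₁·q₂ < 1. Then there exists exactly one pair (A, Γ) of continuous, nondecreasing functions from [0,∞) to [0,∞) with A(0) = Γ(0) = 0 such that for every t ≥ 0: A(t) = sup_{0≤s≤t} max(Y₁(s) + q₁·Γ(s), 0) and Γ(t) = sup_{0≤s≤t} max(Y₂(s) + q₂·A(s), 0). -/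
noncomputable section SkorokhodAux

namespace SkorokhodAux

open Set

/-- running supremum of the positive part -/
def runSup (f : ℝ → ℝ) (t : ℝ) : ℝ := sSup ((fun s => max (f s) 0) '' Set.Icc 0 t)

lemma image_nonempty (f : ℝ → ℝ) {t : ℝ} (ht : 0 ≤ t) :
    ((fun s => max (f s) 0) '' Set.Icc 0 t).Nonempty :=
  (Set.nonempty_Icc.2 ht).image _

lemma bddAbove_image {f : ℝ → ℝ} (hf : ContinuousOn f (Set.Ici 0)) {t : ℝ} :
    BddAbove ((fun s => max (f s) 0) '' Set.Icc 0 t) :=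
  isCompact_Icc.bddAbove_image
    (fun x hx => Filter.Tendsto.max ((hf.mono Set.Icc_subset_Ici_self) x hx) tendsto_const_nhds)

lemma le_runSup {f : ℝ → ℝ} (hf : ContinuousOn f (Set.Ici 0)) {t s : ℝ}
    (hs : s ∈ Set.Icc (0:ℝ) t) : max (f s) 0 ≤ runSup f t :=
  le_csSup (bddAbove_image hf) (Set.mem_image_of_mem _ hs)

lemma runSup_nonneg {f : ℝ → ℝ} (hf : ContinuousOn f (Set.Ici 0)) {t : ℝ} (ht : 0 ≤ t) :
    0 ≤ runSup f t :=
  le_trans (le_max_right _ _) (le_runSup hf ⟨le_refl 0, ht⟩)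

lemma runSup_le {f : ℝ → ℝ} {t c : ℝ} (ht : 0 ≤ t)
    (h : ∀ s ∈ Set.Icc (0:ℝ) t, max (f s) 0 ≤ c) : runSup f t ≤ c :=
  csSup_le (image_nonempty f ht) (by rintro x ⟨s, hs, rfl⟩; exact h s hs)

lemma runSup_monotoneOn {f : ℝ → ℝ} (hf : ContinuousOn f (Set.Ici 0)) :
    MonotoneOn (runSup f) (Set.Ici 0) := by
  intro a ha b hb hab
  exact csSup_le_csSup (bddAbove_image hf) (image_nonempty f ha)
    (Set.image_mono (Set.Icc_subset_Icc_right hab))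

lemma runSup_zero {f : ℝ → ℝ} (h0 : f 0 ≤ 0) : runSup f 0 = 0 := by
  have : (fun s => max (f s) 0) '' Set.Icc (0:ℝ) 0 = {0} := by
    rw [Set.Icc_self, Set.image_singleton, max_eq_right h0]
  rw [runSup, this, csSup_singleton]

/-- one-sided comparison: if `f ≤ g + c` on `[0,t]` with `c ≥ 0`,
then `runSup f t ≤ runSup g t + c`. -/
lemma runSup_le_add {f g : ℝ → ℝ} (hg : ContinuousOn g (Set.Ici 0)) {t c : ℝ}
    (ht : 0 ≤ t) (hc : 0 ≤ c) (h : ∀ u ∈ Set.Icc (0:ℝ) t, f u ≤ g u + c) :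
    runSup f t ≤ runSup g t + c := by
  apply runSup_le ht
  intro s hs
  have h1 : f s ≤ max (g s) 0 + c := le_trans (h s hs) (by gcongr; exact le_max_left _ _)
  have h2 : (0:ℝ) ≤ max (g s) 0 + c := add_nonneg (le_max_right _ _) hc
  exact le_trans (max_le h1 h2) (by gcongr; exact le_runSup hg hs)

lemma runSup_mono_fun {f g : ℝ → ℝ} (hg : ContinuousOn g (Set.Ici 0)) {t : ℝ}
    (ht : 0 ≤ t) (h : ∀ u ∈ Set.Icc (0:ℝ) t, f u ≤ g u) :
    runSup f t ≤ runSup g t := by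
  have := runSup_le_add hg ht (le_refl (0:ℝ)) (fun u hu => by simpa using h u hu)
  simpa using this

lemma abs_runSup_sub_le {f g : ℝ → ℝ} (hf : ContinuousOn f (Set.Ici 0))
    (hg : ContinuousOn g (Set.Ici 0)) {t c : ℝ} (ht : 0 ≤ t) (hc : 0 ≤ c)
    (h : ∀ u ∈ Set.Icc (0:ℝ) t, |f u - g u| ≤ c) :
    |runSup f t - runSup g t| ≤ c := by
  rw [abs_sub_le_iff]
  constructor
  · have := runSup_le_add (f := f) hg ht hc (fun u hu => by
      have := (abs_sub_le_iff.1 (h u hu)).1; linarith)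
    linarith
  · have := runSup_le_add (f := g) hf ht hc (fun u hu => by
      have := (abs_sub_le_iff.1 (h u hu)).2; linarith)
    linarith

lemma runSup_continuousOn {f : ℝ → ℝ} (hf : ContinuousOn f (Set.Ici 0)) :
    ContinuousOn (runSup f) (Set.Ici 0) := by
  set g : ℝ → ℝ := fun s => max (f s) 0 with hgdef
  have hgcont : ContinuousOn g (Set.Ici 0) :=
    fun x hx => Filter.Tendsto.max (hf x hx) tendsto_const_nhds
  intro t ht
  rw [Metric.continuousWithinAt_iff]
  intro ε hε
  -- continuity of g at t within Ici 0
  have hgt := hgcont t ht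
  rw [Metric.continuousWithinAt_iff] at hgt
  obtain ⟨δ, hδpos, hδ⟩ := hgt (ε/4) (by linarith)
  refine ⟨δ, hδpos, ?_⟩
  intro t' ht' hdist
  rw [Real.dist_eq] at hdist ⊢
  have hg_le : ∀ u ∈ Set.Icc (0:ℝ) t, g u ≤ runSup f t := fun u hu => le_runSup hf hu
  have hg_le' : ∀ u ∈ Set.Icc (0:ℝ) t', g u ≤ runSup f t' := fun u hu => le_runSup hf hu
  have hgtle : g t ≤ runSup f t := hg_le t ⟨ht, le_refl t⟩
  have hgtle' : g t' ≤ runSup f t' := hg_le' t' ⟨ht', le_refl t'⟩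
  rcases le_total t t' with hc | hc
  · -- t ≤ t' : runSup f t ≤ runSup f t'
    have h1 : runSup f t ≤ runSup f t' := runSup_monotoneOn hf ht ht' hc
    have h2 : runSup f t' ≤ runSup f t + ε/2 := by
      apply runSup_le (le_trans ht hc)
      intro u hu
      rcases le_total u t with hu2 | hu2
      · exact le_trans (hg_le u ⟨hu.1, hu2⟩) (by linarith)
      · have hud : |u - t| < δ := by
          rw [abs_sub_lt_iff] at hdist ⊢
          constructor
          · linarith [hu.2, hdist.1]
          · linarith
        have := hδ hu.1 (by rwa [Real.dist_eq])
        rw [Real.dist_eq, abs_sub_lt_iff] at this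
        calc g u ≤ g t + ε/4 := by linarith [this.1]
          _ ≤ runSup f t + ε/2 := by linarith
    rw [abs_sub_lt_iff]; constructor <;> linarith
  · -- t' ≤ t
    have h1 : runSup f t' ≤ runSup f t := runSup_monotoneOn hf ht' ht hc
    have hgtt' : |g t' - g t| < ε/4 := by
      have := hδ ht' (by rwa [Real.dist_eq])
      rwa [Real.dist_eq] at this
    have h2 : runSup f t ≤ runSup f t' + ε/2 := by
      apply runSup_le ht
      intro u hu
      rcases le_total u t' with hu2 | hu2
      · exact le_trans (hg_le' u ⟨hu.1, hu2⟩) (by linarith)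
      · have hud : |u - t| < δ := by
          rw [abs_sub_lt_iff]
          constructor
          · linarith [hu.2]
          · rw [abs_sub_lt_iff] at hdist; linarith [hdist.2]
        have := hδ hu.1 (by rwa [Real.dist_eq])
        rw [Real.dist_eq, abs_sub_lt_iff] at this
        rw [abs_sub_lt_iff] at hgtt'
        calc g u ≤ g t + ε/4 := by linarith [this.1]
          _ ≤ g t' + ε/2 := by linarith [hgtt'.2]
          _ ≤ runSup f t' + ε/2 := by linarith
    rw [abs_sub_lt_iff]; constructor <;> linarith

section Seq

variable (Y₁ Y₂ : ℝ → ℝ) (q₁ q₂ : ℝ)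

/-- Picard iteration for the gap process `A`. -/
def seqA : ℕ → ℝ → ℝ
  | 0 => fun _ => 0
  | (n+1) => runSup (fun s => Y₁ s + q₁ * runSup (fun u => Y₂ u + q₂ * seqA n u) s)

/-- Picard iteration for the local-time process `Γ`. -/
def seqG (n : ℕ) : ℝ → ℝ := runSup (fun u => Y₂ u + q₂ * seqA Y₁ Y₂ q₁ q₂ n u)

lemma seqA_succ (n : ℕ) :
    seqA Y₁ Y₂ q₁ q₂ (n+1) = runSup (fun s => Y₁ s + q₁ * seqG Y₁ Y₂ q₁ q₂ n s) := rfl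

variable {Y₁ Y₂ q₁ q₂}
variable (hY₁ : Continuous Y₁) (hY₂ : Continuous Y₂)

include hY₁ hY₂ in
lemma seq_cont : ∀ n, ContinuousOn (seqA Y₁ Y₂ q₁ q₂ n) (Set.Ici 0) ∧
    ContinuousOn (seqG Y₁ Y₂ q₁ q₂ n) (Set.Ici 0) := by
  intro n
  induction n with
  | zero =>
    refine ⟨continuousOn_const, runSup_continuousOn ?_⟩
    exact hY₂.continuousOn.add (continuousOn_const.mul continuousOn_const)
  | succ n ih =>
    have hG : ContinuousOn (seqG Y₁ Y₂ q₁ q₂ n) (Set.Ici 0) := ih.2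
    have hA : ContinuousOn (seqA Y₁ Y₂ q₁ q₂ (n+1)) (Set.Ici 0) := by
      rw [seqA_succ]
      exact runSup_continuousOn (hY₁.continuousOn.add (continuousOn_const.mul hG))
    refine ⟨hA, runSup_continuousOn (hY₂.continuousOn.add (continuousOn_const.mul hA))⟩

variable (hY₁0 : Y₁ 0 ≤ 0) (hY₂0 : Y₂ 0 ≤ 0)

include hY₁0 hY₂0 in
lemma seq_zero : ∀ n, seqA Y₁ Y₂ q₁ q₂ n 0 = 0 ∧ seqG Y₁ Y₂ q₁ q₂ n 0 = 0 := by
  intro n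
  induction n with
  | zero =>
    refine ⟨rfl, runSup_zero ?_⟩
    simp only [seqA, mul_zero, add_zero]
    exact hY₂0
  | succ n ih =>
    have hA : seqA Y₁ Y₂ q₁ q₂ (n+1) 0 = 0 := by
      rw [seqA_succ]; exact runSup_zero (by rw [ih.2, mul_zero, add_zero]; exact hY₁0)
    exact ⟨hA, runSup_zero (by rw [hA, mul_zero, add_zero]; exact hY₂0)⟩

include hY₁ hY₂ in
lemma seqA_monoT (n : ℕ) : MonotoneOn (seqA Y₁ Y₂ q₁ q₂ n) (Set.Ici 0) := by
  cases n with
  | zero => exact monotoneOn_const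
  | succ n =>
    rw [seqA_succ]
    exact runSup_monotoneOn
      (hY₁.continuousOn.add (continuousOn_const.mul (seq_cont hY₁ hY₂ n).2))

variable (hq₁ : 0 ≤ q₁) (hq₂ : 0 ≤ q₂)

include hY₁ hY₂ hq₁ hq₂ in
lemma seqA_monoN : ∀ n, ∀ t, 0 ≤ t →
    seqA Y₁ Y₂ q₁ q₂ n t ≤ seqA Y₁ Y₂ q₁ q₂ (n+1) t := by
  intro n
  induction n with
  | zero =>
    intro t ht
    show (0:ℝ) ≤ seqA Y₁ Y₂ q₁ q₂ 1 t
    rw [seqA_succ]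
    exact runSup_nonneg
      (hY₁.continuousOn.add (continuousOn_const.mul (seq_cont hY₁ hY₂ 0).2)) ht
  | succ n ih =>
    intro t ht
    have hGmono : ∀ s, 0 ≤ s →
        seqG Y₁ Y₂ q₁ q₂ n s ≤ seqG Y₁ Y₂ q₁ q₂ (n+1) s := by
      intro s hs
      apply runSup_mono_fun
        (hY₂.continuousOn.add (continuousOn_const.mul (seq_cont hY₁ hY₂ (n+1)).1)) hs
      intro u hu
      have := ih u hu.1
      simp only [Pi.add_apply, Pi.mul_apply]
      nlinarith
    rw [seqA_succ, seqA_succ]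
    apply runSup_mono_fun
      (hY₁.continuousOn.add (continuousOn_const.mul (seq_cont hY₁ hY₂ (n+1)).2)) ht
    intro u hu
    have := hGmono u hu.1
    simp only [Pi.add_apply, Pi.mul_apply]
    nlinarith

include hY₁ hY₂ hq₁ hq₂ in
lemma seqG_monoN : ∀ n, ∀ t, 0 ≤ t →
    seqG Y₁ Y₂ q₁ q₂ n t ≤ seqG Y₁ Y₂ q₁ q₂ (n+1) t := by
  intro n t ht
  apply runSup_mono_fun
    (hY₂.continuousOn.add (continuousOn_const.mul (seq_cont hY₁ hY₂ (n+1)).1)) ht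
  intro u hu
  have := seqA_monoN hY₁ hY₂ hq₁ hq₂ n u hu.1
  simp only [Pi.add_apply, Pi.mul_apply]
  nlinarith

end Seq

section Bounds

variable {Y₁ Y₂ : ℝ → ℝ} {q₁ q₂ : ℝ}
variable (hY₁ : Continuous Y₁) (hY₂ : Continuous Y₂) (hq₁ : 0 ≤ q₁) (hq₂ : 0 ≤ q₂)

include hY₁ hY₂ hq₁ hq₂ in
lemma seqA_one_nonneg {T : ℝ} (hT : 0 ≤ T) : 0 ≤ seqA Y₁ Y₂ q₁ q₂ 1 T := by
  rw [seqA_succ]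
  exact runSup_nonneg
    (hY₁.continuousOn.add (continuousOn_const.mul (seq_cont hY₁ hY₂ 0).2)) hT

include hY₁ hY₂ hq₁ hq₂ in
lemma seq_step (T : ℝ) (hT : 0 ≤ T) : ∀ n, ∀ t ∈ Set.Icc (0:ℝ) T,
    seqA Y₁ Y₂ q₁ q₂ (n+1) t ≤ seqA Y₁ Y₂ q₁ q₂ n t + (q₁*q₂)^n * seqA Y₁ Y₂ q₁ q₂ 1 T := by
  intro n
  induction n with
  | zero =>
    intro t ht
    have := seqA_monoT hY₁ hY₂ (q₁ := q₁) (q₂ := q₂) 1 ht.1 hT ht.2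
    simpa [seqA] using this
  | succ n ih =>
    intro t ht
    set C := seqA Y₁ Y₂ q₁ q₂ 1 T with hC
    have hCnn : 0 ≤ C := seqA_one_nonneg hY₁ hY₂ hq₁ hq₂ hT
    have hrn : (0:ℝ) ≤ (q₁*q₂)^n := pow_nonneg (mul_nonneg hq₁ hq₂) n
    -- comparison of the Γ iterates
    have hG : ∀ s ∈ Set.Icc (0:ℝ) T,
        seqG Y₁ Y₂ q₁ q₂ (n+1) s ≤ seqG Y₁ Y₂ q₁ q₂ n s + q₂ * ((q₁*q₂)^n * C) := by
      intro s hs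
      apply runSup_le_add
        (hY₂.continuousOn.add (continuousOn_const.mul (seq_cont hY₁ hY₂ n).1)) hs.1
        (by positivity)
      intro u hu
      have := ih u ⟨hu.1, le_trans hu.2 hs.2⟩
      simp only [Pi.add_apply, Pi.mul_apply]
      nlinarith
    rw [seqA_succ, seqA_succ]
    have key := runSup_le_add
      (f := fun s => Y₁ s + q₁ * seqG Y₁ Y₂ q₁ q₂ (n+1) s)
      (g := fun s => Y₁ s + q₁ * seqG Y₁ Y₂ q₁ q₂ n s)
      (hY₁.continuousOn.add (continuousOn_const.mul (seq_cont hY₁ hY₂ n).2)) ht.1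
      (c := q₁ * (q₂ * ((q₁*q₂)^n * C))) (by positivity)
      (fun u hu => by
        have h1 := hG u ⟨hu.1, le_trans hu.2 ht.2⟩
        have h2 := mul_le_mul_of_nonneg_left h1 hq₁
        show Y₁ u + q₁ * seqG Y₁ Y₂ q₁ q₂ (n+1) u
          ≤ Y₁ u + q₁ * seqG Y₁ Y₂ q₁ q₂ n u + q₁ * (q₂ * ((q₁*q₂)^n * C))
        nlinarith)
    have hring : q₁ * (q₂ * ((q₁*q₂)^n * C)) = (q₁*q₂)^(n+1) * C := by ring
    rw [hring] at key
    exact key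

variable (hq : q₁ * q₂ < 1)

include hY₁ hY₂ hq₁ hq₂ hq in
lemma seq_cum (T : ℝ) (hT : 0 ≤ T) : ∀ n k, ∀ t ∈ Set.Icc (0:ℝ) T,
    seqA Y₁ Y₂ q₁ q₂ (n+k) t ≤ seqA Y₁ Y₂ q₁ q₂ n t
      + (q₁*q₂)^n * ((1 - (q₁*q₂)^k)/(1 - q₁*q₂)) * seqA Y₁ Y₂ q₁ q₂ 1 T := by
  intro n k
  induction k with
  | zero => intro t ht; simp
  | succ k ih =>
    intro t ht
    set r := q₁*q₂ with hr
    set C := seqA Y₁ Y₂ q₁ q₂ 1 T with hC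
    have hCnn : 0 ≤ C := seqA_one_nonneg hY₁ hY₂ hq₁ hq₂ hT
    have hr0 : 0 ≤ r := mul_nonneg hq₁ hq₂
    have hr1 : 1 - r > 0 := by linarith
    have h1 := ih t ht
    have h2 := seq_step hY₁ hY₂ hq₁ hq₂ T hT (n+k) t ht
    have hre : (q₁*q₂)^(n+k) = r^n * r^k := by rw [hr, pow_add]
    have key : r^n * ((1 - r^k)/(1-r)) * C + r^n * r^k * C
        = r^n * ((1 - r^(k+1))/(1-r)) * C := by
      field_simp
      ring
    have : seqA Y₁ Y₂ q₁ q₂ (n+(k+1)) t = seqA Y₁ Y₂ q₁ q₂ ((n+k)+1) t := by ring_nf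
    rw [this]
    calc seqA Y₁ Y₂ q₁ q₂ ((n+k)+1) t
        ≤ seqA Y₁ Y₂ q₁ q₂ (n+k) t + r^n * r^k * C := by rw [← hre]; exact h2
      _ ≤ seqA Y₁ Y₂ q₁ q₂ n t + r^n * ((1 - r^k)/(1-r)) * C + r^n * r^k * C := by linarith
      _ = seqA Y₁ Y₂ q₁ q₂ n t + r^n * ((1 - r^(k+1))/(1-r)) * C := by linarith [key]

include hY₁ hY₂ hq₁ hq₂ hq in
lemma seq_cum' (T : ℝ) (hT : 0 ≤ T) : ∀ n k, ∀ t ∈ Set.Icc (0:ℝ) T,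
    seqA Y₁ Y₂ q₁ q₂ (n+k) t ≤ seqA Y₁ Y₂ q₁ q₂ n t
      + (q₁*q₂)^n * (1 - q₁*q₂)⁻¹ * seqA Y₁ Y₂ q₁ q₂ 1 T := by
  intro n k t ht
  have h := seq_cum hY₁ hY₂ hq₁ hq₂ hq T hT n k t ht
  have hCnn : 0 ≤ seqA Y₁ Y₂ q₁ q₂ 1 T := seqA_one_nonneg hY₁ hY₂ hq₁ hq₂ hT
  have hr0 : 0 ≤ q₁*q₂ := mul_nonneg hq₁ hq₂
  have hr1 : (0:ℝ) < 1 - q₁*q₂ := by linarith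
  have hk : (0:ℝ) ≤ (q₁*q₂)^k := pow_nonneg hr0 k
  have : (1 - (q₁*q₂)^k)/(1 - q₁*q₂) ≤ (1 - q₁*q₂)⁻¹ := by
    rw [div_le_iff₀ hr1, inv_mul_cancel₀ (ne_of_gt hr1)]
    linarith
  have hrn : (0:ℝ) ≤ (q₁*q₂)^n := pow_nonneg hr0 n
  have h3 : (q₁*q₂)^n * ((1 - (q₁*q₂)^k)/(1 - q₁*q₂)) * seqA Y₁ Y₂ q₁ q₂ 1 T
      ≤ (q₁*q₂)^n * (1 - q₁*q₂)⁻¹ * seqA Y₁ Y₂ q₁ q₂ 1 T :=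
    mul_le_mul_of_nonneg_right (mul_le_mul_of_nonneg_left this hrn) hCnn
  linarith

include hY₁ hY₂ hq₁ hq₂ hq in
lemma seqA_le_bound {t : ℝ} (ht : 0 ≤ t) (n : ℕ) :
    seqA Y₁ Y₂ q₁ q₂ n t ≤ (1 - q₁*q₂)⁻¹ * seqA Y₁ Y₂ q₁ q₂ 1 t := by
  have := seq_cum' hY₁ hY₂ hq₁ hq₂ hq t ht 0 n t ⟨ht, le_refl t⟩
  simpa [seqA] using this

end Bounds

section Limit

/-- exchange of a conditional `sSup` over a set with a monotone `ciSup`. -/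
lemma csSup_image_iSup {h : ℕ → ℝ → ℝ} {K : Set ℝ} (hne : K.Nonempty)
    (hmono : ∀ s ∈ K, Monotone fun n => h n s) {C : ℝ}
    (hbd : ∀ n, ∀ s ∈ K, h n s ≤ C) :
    sSup ((fun s => ⨆ n, h n s) '' K) = ⨆ n, sSup (h n '' K) := by
  have hbd1 : ∀ n, BddAbove (h n '' K) := fun n =>
    ⟨C, by rintro x ⟨s, hs, rfl⟩; exact hbd n s hs⟩
  have hbdr : ∀ s ∈ K, BddAbove (Set.range fun n => h n s) :=
    fun s hs => ⟨C, by rintro x ⟨n, rfl⟩; exact hbd n s hs⟩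
  have hRbdd : BddAbove (Set.range fun n => sSup (h n '' K)) := by
    refine ⟨C, ?_⟩
    rintro x ⟨n, rfl⟩
    exact csSup_le (hne.image _) (by rintro y ⟨s, hs, rfl⟩; exact hbd n s hs)
  apply le_antisymm
  · apply csSup_le (hne.image _)
    rintro x ⟨s, hs, rfl⟩
    refine ciSup_le fun n => ?_
    exact le_trans (le_csSup (hbd1 n) (Set.mem_image_of_mem _ hs)) (le_ciSup hRbdd n)
  · refine ciSup_le fun n => ?_
    apply csSup_le (hne.image _)
    rintro x ⟨s, hs, rfl⟩
    refine le_trans (le_ciSup (hbdr s hs) n) (le_csSup ?_ (Set.mem_image_of_mem _ hs))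
    exact ⟨C, by rintro y ⟨u, hu, rfl⟩; exact ciSup_le fun m => hbd m u hu⟩

variable (Y₁ Y₂ : ℝ → ℝ) (q₁ q₂ : ℝ)

/-- the candidate solution `A` -/
def Alim (t : ℝ) : ℝ := ⨆ n, seqA Y₁ Y₂ q₁ q₂ n t

variable {Y₁ Y₂ q₁ q₂}
variable (hY₁ : Continuous Y₁) (hY₂ : Continuous Y₂)
variable (hq₁ : 0 ≤ q₁) (hq₂ : 0 ≤ q₂) (hq : q₁ * q₂ < 1)

include hY₁ hY₂ hq₁ hq₂ hq in
lemma bddA {t : ℝ} (ht : 0 ≤ t) :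
    BddAbove (Set.range fun n => seqA Y₁ Y₂ q₁ q₂ n t) :=
  ⟨(1 - q₁*q₂)⁻¹ * seqA Y₁ Y₂ q₁ q₂ 1 t, by
    rintro x ⟨n, rfl⟩; exact seqA_le_bound hY₁ hY₂ hq₁ hq₂ hq ht n⟩

include hY₁ hY₂ hq₁ hq₂ hq in
lemma bddA' {t : ℝ} (ht : 0 ≤ t) :
    BddAbove (Set.range fun n => seqA Y₁ Y₂ q₁ q₂ (n+1) t) :=
  ⟨(1 - q₁*q₂)⁻¹ * seqA Y₁ Y₂ q₁ q₂ 1 t, by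
    rintro x ⟨n, rfl⟩; exact seqA_le_bound hY₁ hY₂ hq₁ hq₂ hq ht (n+1)⟩

/-- an a priori bound for the `Γ` iterates -/
def GB (t : ℝ) : ℝ :=
  runSup Y₂ t + q₂ * ((1 - q₁*q₂)⁻¹ * seqA Y₁ Y₂ q₁ q₂ 1 t)

include hY₁ hY₂ hq₁ hq₂ hq in
lemma seqG_le {t : ℝ} (ht : 0 ≤ t) (n : ℕ) {s : ℝ} (hs : s ∈ Set.Icc (0:ℝ) t) :
    seqG Y₁ Y₂ q₁ q₂ n s ≤ GB (Y₁ := Y₁) (Y₂ := Y₂) (q₁ := q₁) (q₂ := q₂) t := by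
  have hinv : (0:ℝ) ≤ (1 - q₁*q₂)⁻¹ := by
    apply inv_nonneg.2; linarith
  apply runSup_le hs.1
  intro u hu
  have hu' : u ∈ Set.Icc (0:ℝ) t := ⟨hu.1, le_trans hu.2 hs.2⟩
  have h1 : seqA Y₁ Y₂ q₁ q₂ n u ≤ (1 - q₁*q₂)⁻¹ * seqA Y₁ Y₂ q₁ q₂ 1 u :=
    seqA_le_bound hY₁ hY₂ hq₁ hq₂ hq hu.1 n
  have h2 : seqA Y₁ Y₂ q₁ q₂ 1 u ≤ seqA Y₁ Y₂ q₁ q₂ 1 t :=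
    seqA_monoT hY₁ hY₂ 1 hu'.1 ht hu'.2
  have h3 : seqA Y₁ Y₂ q₁ q₂ n u ≤ (1 - q₁*q₂)⁻¹ * seqA Y₁ Y₂ q₁ q₂ 1 t := by
    calc seqA Y₁ Y₂ q₁ q₂ n u ≤ (1 - q₁*q₂)⁻¹ * seqA Y₁ Y₂ q₁ q₂ 1 u := h1
      _ ≤ (1 - q₁*q₂)⁻¹ * seqA Y₁ Y₂ q₁ q₂ 1 t := mul_le_mul_of_nonneg_left h2 hinv
  have hb : (0:ℝ) ≤ q₂ * ((1 - q₁*q₂)⁻¹ * seqA Y₁ Y₂ q₁ q₂ 1 t) := by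
    have := seqA_one_nonneg hY₁ hY₂ hq₁ hq₂ ht
    positivity
  apply max_le
  · have hY : Y₂ u ≤ max (Y₂ u) 0 := le_max_left _ _
    have hmax : max (Y₂ u) 0 ≤ runSup Y₂ t := le_runSup hY₂.continuousOn hu'
    have := mul_le_mul_of_nonneg_left h3 hq₂
    unfold GB
    linarith
  · unfold GB
    have : (0:ℝ) ≤ runSup Y₂ t := runSup_nonneg hY₂.continuousOn ht
    linarith

end Limit

section Eqs

lemma pos_affine_iSup (c q : ℝ) (hq : 0 ≤ q) (g : ℕ → ℝ) (hbdd : BddAbove (Set.range g)) :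
    max (c + q * ⨆ n, g n) 0 = ⨆ n, max (c + q * g n) 0 := by
  have hmono : Monotone fun x : ℝ => max (c + q * x) 0 := fun a b hab =>
    max_le_max (by nlinarith) le_rfl
  have hcont : ContinuousAt (fun x : ℝ => max (c + q * x) 0) (⨆ n, g n) :=
    ((continuous_const.add (continuous_const.mul continuous_id)).max
      continuous_const).continuousAt
  exact Monotone.map_ciSup_of_continuousAt hcont hmono hbdd

variable {Y₁ Y₂ : ℝ → ℝ} {q₁ q₂ : ℝ}
variable (hY₁ : Continuous Y₁) (hY₂ : Continuous Y₂)
variable (hq₁ : 0 ≤ q₁) (hq₂ : 0 ≤ q₂) (hq : q₁ * q₂ < 1)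

include hY₁ hY₂ hq₁ hq₂ hq in
lemma Glim_eq {t : ℝ} (ht : 0 ≤ t) :
    runSup (fun u => Y₂ u + q₂ * Alim Y₁ Y₂ q₁ q₂ u) t = ⨆ n, seqG Y₁ Y₂ q₁ q₂ n t := by
  have himg : (fun s => max (Y₂ s + q₂ * Alim Y₁ Y₂ q₁ q₂ s) 0) '' Set.Icc 0 t
      = (fun s => ⨆ n, max (Y₂ s + q₂ * seqA Y₁ Y₂ q₁ q₂ n s) 0) '' Set.Icc 0 t := by
    apply Set.image_congr
    intro s hs
    exact pos_affine_iSup (Y₂ s) q₂ hq₂ _ (bddA hY₁ hY₂ hq₁ hq₂ hq hs.1)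
  show sSup ((fun s => max (Y₂ s + q₂ * Alim Y₁ Y₂ q₁ q₂ s) 0) '' Set.Icc 0 t) = _
  rw [himg]
  have := csSup_image_iSup (h := fun n s => max (Y₂ s + q₂ * seqA Y₁ Y₂ q₁ q₂ n s) 0)
    (K := Set.Icc 0 t) (Set.nonempty_Icc.2 ht) ?_
    (C := runSup Y₂ t + q₂ * ((1 - q₁*q₂)⁻¹ * seqA Y₁ Y₂ q₁ q₂ 1 t)) ?_
  · exact this
  · intro s hs
    apply monotone_nat_of_le_succ
    intro n
    have := seqA_monoN hY₁ hY₂ hq₁ hq₂ n s hs.1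
    exact max_le_max (by nlinarith) le_rfl
  · intro n s hs
    have hinv : (0:ℝ) ≤ (1 - q₁*q₂)⁻¹ := by apply inv_nonneg.2; linarith
    have h1 : seqA Y₁ Y₂ q₁ q₂ n s ≤ (1 - q₁*q₂)⁻¹ * seqA Y₁ Y₂ q₁ q₂ 1 s :=
      seqA_le_bound hY₁ hY₂ hq₁ hq₂ hq hs.1 n
    have h2 : seqA Y₁ Y₂ q₁ q₂ 1 s ≤ seqA Y₁ Y₂ q₁ q₂ 1 t :=
      seqA_monoT hY₁ hY₂ 1 hs.1 ht hs.2
    have h3 : seqA Y₁ Y₂ q₁ q₂ n s ≤ (1 - q₁*q₂)⁻¹ * seqA Y₁ Y₂ q₁ q₂ 1 t :=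
      le_trans h1 (mul_le_mul_of_nonneg_left h2 hinv)
    have hb : (0:ℝ) ≤ q₂ * ((1 - q₁*q₂)⁻¹ * seqA Y₁ Y₂ q₁ q₂ 1 t) := by
      have := seqA_one_nonneg hY₁ hY₂ hq₁ hq₂ ht
      positivity
    apply max_le
    · have hmax : max (Y₂ s) 0 ≤ runSup Y₂ t := le_runSup hY₂.continuousOn hs
      have := mul_le_mul_of_nonneg_left h3 hq₂
      have hY : Y₂ s ≤ max (Y₂ s) 0 := le_max_left _ _
      linarith
    · have : (0:ℝ) ≤ runSup Y₂ t := runSup_nonneg hY₂.continuousOn ht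
      linarith

include hY₁ hY₂ hq₁ hq₂ hq in
lemma Alim_eq {t : ℝ} (ht : 0 ≤ t) :
    runSup (fun s => Y₁ s + q₁ * ⨆ n, seqG Y₁ Y₂ q₁ q₂ n s) t = Alim Y₁ Y₂ q₁ q₂ t := by
  have hbddG : ∀ s : ℝ, 0 ≤ s → BddAbove (Set.range fun n => seqG Y₁ Y₂ q₁ q₂ n s) := by
    intro s hs
    exact ⟨GB (Y₁ := Y₁) (Y₂ := Y₂) (q₁ := q₁) (q₂ := q₂) s, by
      rintro x ⟨n, rfl⟩
      exact seqG_le hY₁ hY₂ hq₁ hq₂ hq hs n ⟨hs, le_refl s⟩⟩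
  have himg : (fun s => max (Y₁ s + q₁ * ⨆ n, seqG Y₁ Y₂ q₁ q₂ n s) 0) '' Set.Icc 0 t
      = (fun s => ⨆ n, max (Y₁ s + q₁ * seqG Y₁ Y₂ q₁ q₂ n s) 0) '' Set.Icc 0 t := by
    apply Set.image_congr
    intro s hs
    exact pos_affine_iSup (Y₁ s) q₁ hq₁ _ (hbddG s hs.1)
  show sSup ((fun s => max (Y₁ s + q₁ * ⨆ n, seqG Y₁ Y₂ q₁ q₂ n s) 0) '' Set.Icc 0 t) = _
  rw [himg]
  have hGBmono : ∀ s ∈ Set.Icc (0:ℝ) t, ∀ n,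
      seqG Y₁ Y₂ q₁ q₂ n s ≤ GB (Y₁ := Y₁) (Y₂ := Y₂) (q₁ := q₁) (q₂ := q₂) t :=
    fun s hs n => seqG_le hY₁ hY₂ hq₁ hq₂ hq ht n hs
  have hex := csSup_image_iSup (h := fun n s => max (Y₁ s + q₁ * seqG Y₁ Y₂ q₁ q₂ n s) 0)
    (K := Set.Icc 0 t) (Set.nonempty_Icc.2 ht) ?_
    (C := runSup Y₁ t + q₁ * GB (Y₁ := Y₁) (Y₂ := Y₂) (q₁ := q₁) (q₂ := q₂) t) ?_
  · rw [hex]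
    -- now ⨆ n, sSup (h n '' Icc 0 t) = ⨆ n, seqA (n+1) t = Alim t
    have hid : ∀ n, sSup ((fun s => max (Y₁ s + q₁ * seqG Y₁ Y₂ q₁ q₂ n s) 0) '' Set.Icc 0 t)
        = seqA Y₁ Y₂ q₁ q₂ (n+1) t := fun n => rfl
    have hrw : (fun n => sSup ((fun s => max (Y₁ s + q₁ * seqG Y₁ Y₂ q₁ q₂ n s) 0)
        '' Set.Icc 0 t)) = fun n => seqA Y₁ Y₂ q₁ q₂ (n+1) t := funext hid
    rw [hrw]
    apply le_antisymm
    · exact ciSup_le fun n => le_ciSup (bddA hY₁ hY₂ hq₁ hq₂ hq ht) (n+1)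
    · exact ciSup_le fun n => le_trans (seqA_monoN hY₁ hY₂ hq₁ hq₂ n t ht)
        (le_ciSup (bddA' hY₁ hY₂ hq₁ hq₂ hq ht) n)
  · intro s hs
    apply monotone_nat_of_le_succ
    intro n
    have := seqG_monoN hY₁ hY₂ hq₁ hq₂ n s hs.1
    exact max_le_max (by nlinarith) le_rfl
  · intro n s hs
    have h3 := hGBmono s hs n
    have hGBnn : (0:ℝ) ≤ GB (Y₁ := Y₁) (Y₂ := Y₂) (q₁ := q₁) (q₂ := q₂) t := by
      have h0 := seqG_le hY₁ hY₂ hq₁ hq₂ hq ht 0 ⟨le_refl (0:ℝ), ht⟩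
      have h00 : (0:ℝ) ≤ seqG Y₁ Y₂ q₁ q₂ 0 0 :=
        runSup_nonneg (hY₂.continuousOn.add
          (continuousOn_const.mul (seq_cont hY₁ hY₂ 0).1)) (le_refl 0)
      linarith
    apply max_le
    · have hmax : max (Y₁ s) 0 ≤ runSup Y₁ t := le_runSup hY₁.continuousOn hs
      have := mul_le_mul_of_nonneg_left h3 hq₁
      have hY : Y₁ s ≤ max (Y₁ s) 0 := le_max_left _ _
      linarith
    · have : (0:ℝ) ≤ runSup Y₁ t := runSup_nonneg hY₁.continuousOn ht
      have := mul_nonneg hq₁ hGBnn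
      linarith

end Eqs

section Cont

variable {Y₁ Y₂ : ℝ → ℝ} {q₁ q₂ : ℝ}
variable (hY₁ : Continuous Y₁) (hY₂ : Continuous Y₂)
variable (hq₁ : 0 ≤ q₁) (hq₂ : 0 ≤ q₂) (hq : q₁ * q₂ < 1)

include hY₁ hY₂ hq₁ hq₂ hq in
lemma Alim_tail {T : ℝ} (hT : 0 ≤ T) (n : ℕ) {t : ℝ} (ht : t ∈ Set.Icc (0:ℝ) T) :
    Alim Y₁ Y₂ q₁ q₂ t ≤ seqA Y₁ Y₂ q₁ q₂ n t
      + (q₁*q₂)^n * ((1 - q₁*q₂)⁻¹ * seqA Y₁ Y₂ q₁ q₂ 1 T) := by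
  apply ciSup_le
  intro m
  have hmono : Monotone fun k => seqA Y₁ Y₂ q₁ q₂ k t :=
    monotone_nat_of_le_succ fun k => seqA_monoN hY₁ hY₂ hq₁ hq₂ k t ht.1
  have htail : (0:ℝ) ≤ (q₁*q₂)^n * ((1 - q₁*q₂)⁻¹ * seqA Y₁ Y₂ q₁ q₂ 1 T) := by
    have h1 := seqA_one_nonneg hY₁ hY₂ hq₁ hq₂ hT
    have h2 : (0:ℝ) ≤ q₁*q₂ := mul_nonneg hq₁ hq₂
    have h3 : (0:ℝ) ≤ (1 - q₁*q₂)⁻¹ := by apply inv_nonneg.2; linarith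
    positivity
  rcases le_total m n with hmn | hmn
  · exact le_trans (hmono hmn) (by linarith)
  · obtain ⟨k, rfl⟩ := Nat.exists_eq_add_of_le hmn
    have := seq_cum' hY₁ hY₂ hq₁ hq₂ hq T hT n k t ht
    have hre : (q₁*q₂)^n * (1 - q₁*q₂)⁻¹ * seqA Y₁ Y₂ q₁ q₂ 1 T
        = (q₁*q₂)^n * ((1 - q₁*q₂)⁻¹ * seqA Y₁ Y₂ q₁ q₂ 1 T) := by ring
    linarith [hre ▸ this]

include hY₁ hY₂ hq₁ hq₂ hq in
lemma Alim_contOn : ContinuousOn (Alim Y₁ Y₂ q₁ q₂) (Set.Ici 0) := by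
  have key : ∀ T : ℝ, 0 ≤ T → ContinuousOn (Alim Y₁ Y₂ q₁ q₂) (Set.Icc 0 T) := by
    intro T hT
    have hunif : TendstoUniformlyOn (fun n t => seqA Y₁ Y₂ q₁ q₂ n t)
        (Alim Y₁ Y₂ q₁ q₂) Filter.atTop (Set.Icc 0 T) := by
      rw [Metric.tendstoUniformlyOn_iff]
      intro ε hε
      set D := (1 - q₁*q₂)⁻¹ * seqA Y₁ Y₂ q₁ q₂ 1 T with hD
      have hr0 : (0:ℝ) ≤ q₁*q₂ := mul_nonneg hq₁ hq₂
      have htend : Filter.Tendsto (fun n => (q₁*q₂)^n * D) Filter.atTop (nhds 0) := by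
        have := (tendsto_pow_atTop_nhds_zero_of_lt_one hr0 hq).mul_const D
        simpa using this
      filter_upwards [htend.eventually (gt_mem_nhds hε)] with n hn t ht
      have h1 : seqA Y₁ Y₂ q₁ q₂ n t ≤ Alim Y₁ Y₂ q₁ q₂ t :=
        le_ciSup (bddA hY₁ hY₂ hq₁ hq₂ hq ht.1) n
      have h2 := Alim_tail hY₁ hY₂ hq₁ hq₂ hq hT n ht
      rw [Real.dist_eq, abs_of_nonneg (by linarith)]
      rw [hD] at hn
      linarith
    exact hunif.continuousOn (Filter.Frequently.of_forall fun n =>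
      (seq_cont hY₁ hY₂ n).1.mono Set.Icc_subset_Ici_self)
  intro t ht
  have h1 : ContinuousWithinAt (Alim Y₁ Y₂ q₁ q₂) (Set.Icc 0 (t+1)) t :=
    (key (t+1) (by linarith [Set.mem_Ici.1 ht])).continuousWithinAt
      ⟨ht, by linarith⟩
  apply h1.mono_of_mem_nhdsWithin
  rw [mem_nhdsWithin]
  exact ⟨Set.Iio (t+1), isOpen_Iio, lt_add_one t,
    fun x hx => ⟨hx.2, le_of_lt hx.1⟩⟩

include hY₁ hY₂ hq₁ hq₂ hq in
lemma Alim_monoT : MonotoneOn (Alim Y₁ Y₂ q₁ q₂) (Set.Ici 0) := by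
  intro a ha b hb hab
  apply ciSup_le
  intro n
  exact le_trans (seqA_monoT hY₁ hY₂ n ha hb hab) (le_ciSup (bddA hY₁ hY₂ hq₁ hq₂ hq hb) n)

include hY₁ hY₂ hq₁ hq₂ hq in
lemma Alim_nonneg {t : ℝ} (ht : 0 ≤ t) : 0 ≤ Alim Y₁ Y₂ q₁ q₂ t := by
  have : seqA Y₁ Y₂ q₁ q₂ 0 t ≤ Alim Y₁ Y₂ q₁ q₂ t :=
    le_ciSup (bddA hY₁ hY₂ hq₁ hq₂ hq ht) 0
  simpa [seqA] using this

variable (hY₁0 : Y₁ 0 ≤ 0) (hY₂0 : Y₂ 0 ≤ 0)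

include hY₁ hY₂ hq₁ hq₂ hq hY₁0 hY₂0 in
lemma Alim_zero : Alim Y₁ Y₂ q₁ q₂ 0 = 0 := by
  have h : (fun n => seqA Y₁ Y₂ q₁ q₂ n 0) = fun _ : ℕ => (0:ℝ) :=
    funext fun n => (seq_zero hY₁0 hY₂0 n).1
  show ⨆ n, seqA Y₁ Y₂ q₁ q₂ n 0 = 0
  rw [h, ciSup_const]

end Cont
end SkorokhodAux


/-- The property of being a solution pair `(A, Γ)` of the two-dimensional
Skorokhod (Harrison–Reiman) fixed-point system driven by `Y₁, Y₂` with
coupling constants `q₁, q₂`: both components are continuous, nondecreasing,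
nonnegative on `[0,∞)`, vanish at `0`, and satisfy the fixed-point equations. -/
def IsSkorokhodPair (Y₁ Y₂ : ℝ → ℝ) (q₁ q₂ : ℝ) (A Γ : ℝ → ℝ) : Prop :=
  ContinuousOn A (Set.Ici 0) ∧ ContinuousOn Γ (Set.Ici 0) ∧
  MonotoneOn A (Set.Ici 0) ∧ MonotoneOn Γ (Set.Ici 0) ∧
  (∀ t ≥ (0 : ℝ), 0 ≤ A t) ∧ (∀ t ≥ (0 : ℝ), 0 ≤ Γ t) ∧
  A 0 = 0 ∧ Γ 0 = 0 ∧
  (∀ t ≥ (0 : ℝ), A t = sSup ((fun s => max (Y₁ s + q₁ * Γ s) 0) '' Set.Icc 0 t)) ∧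
  (∀ t ≥ (0 : ℝ), Γ t = sSup ((fun s => max (Y₂ s + q₂ * A s) 0) '' Set.Icc 0 t))

/-- Existence and uniqueness (on `[0,∞)`) for the two-dimensional Skorokhod
(Harrison–Reiman) fixed-point system when `q₁, q₂ ≥ 0` and `q₁ q₂ < 1`. -/
theorem skorokhod_pair_exists_unique
    (Y₁ Y₂ : ℝ → ℝ) (hY₁ : Continuous Y₁) (hY₂ : Continuous Y₂)
    (hY₁0 : Y₁ 0 ≤ 0) (hY₂0 : Y₂ 0 ≤ 0)
    (q₁ q₂ : ℝ) (hq₁ : 0 ≤ q₁) (hq₂ : 0 ≤ q₂) (hq : q₁ * q₂ < 1) :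
    (∃ A Γ : ℝ → ℝ, IsSkorokhodPair Y₁ Y₂ q₁ q₂ A Γ) ∧
    (∀ A Γ A' Γ' : ℝ → ℝ, IsSkorokhodPair Y₁ Y₂ q₁ q₂ A Γ →
      IsSkorokhodPair Y₁ Y₂ q₁ q₂ A' Γ' →
      ∀ t ≥ (0 : ℝ), A t = A' t ∧ Γ t = Γ' t) := by
  constructor
  · -- existence
    set A : ℝ → ℝ := SkorokhodAux.Alim Y₁ Y₂ q₁ q₂ with hAdef
    set Γ : ℝ → ℝ := SkorokhodAux.runSup (fun u => Y₂ u + q₂ * A u) with hΓdef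
    have hAcont : ContinuousOn A (Set.Ici 0) :=
      SkorokhodAux.Alim_contOn hY₁ hY₂ hq₁ hq₂ hq
    have hA0 : A 0 = 0 := SkorokhodAux.Alim_zero hY₁ hY₂ hq₁ hq₂ hq hY₁0 hY₂0
    have hFAcont : ContinuousOn (fun u => Y₂ u + q₂ * A u) (Set.Ici 0) :=
      hY₂.continuousOn.add (continuousOn_const.mul hAcont)
    have hΓcont : ContinuousOn Γ (Set.Ici 0) := SkorokhodAux.runSup_continuousOn hFAcont
    have hΓG : ∀ t : ℝ, 0 ≤ t → Γ t = ⨆ n, SkorokhodAux.seqG Y₁ Y₂ q₁ q₂ n t :=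
      fun t ht => SkorokhodAux.Glim_eq hY₁ hY₂ hq₁ hq₂ hq ht
    refine ⟨A, Γ, hAcont, hΓcont, SkorokhodAux.Alim_monoT hY₁ hY₂ hq₁ hq₂ hq,
      SkorokhodAux.runSup_monotoneOn hFAcont,
      fun t ht => SkorokhodAux.Alim_nonneg hY₁ hY₂ hq₁ hq₂ hq ht,
      fun t ht => SkorokhodAux.runSup_nonneg hFAcont ht,
      hA0, SkorokhodAux.runSup_zero (by rw [hA0, mul_zero, add_zero]; exact hY₂0),
      ?_, fun t ht => rfl⟩
    intro t ht
    have himg : (fun s => max (Y₁ s + q₁ * Γ s) 0) '' Set.Icc 0 t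
        = (fun s => max (Y₁ s + q₁ * ⨆ n, SkorokhodAux.seqG Y₁ Y₂ q₁ q₂ n s) 0)
          '' Set.Icc 0 t := by
      apply Set.image_congr
      intro s hs
      rw [hΓG s hs.1]
    show A t = sSup ((fun s => max (Y₁ s + q₁ * Γ s) 0) '' Set.Icc 0 t)
    rw [himg]
    exact (SkorokhodAux.Alim_eq hY₁ hY₂ hq₁ hq₂ hq ht).symm
  · -- uniqueness
    intro A Γ A' Γ' h h' t ht
    obtain ⟨hAc, hΓc, -, -, -, -, -, -, hAeq, hΓeq⟩ := h
    obtain ⟨hAc', hΓc', -, -, -, -, -, -, hAeq', hΓeq'⟩ := h'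
    have hGΓ : ContinuousOn (fun u => Y₁ u + q₁ * Γ u) (Set.Ici 0) :=
      hY₁.continuousOn.add (continuousOn_const.mul hΓc)
    have hGΓ' : ContinuousOn (fun u => Y₁ u + q₁ * Γ' u) (Set.Ici 0) :=
      hY₁.continuousOn.add (continuousOn_const.mul hΓc')
    have hFA : ContinuousOn (fun u => Y₂ u + q₂ * A u) (Set.Ici 0) :=
      hY₂.continuousOn.add (continuousOn_const.mul hAc)
    have hFA' : ContinuousOn (fun u => Y₂ u + q₂ * A' u) (Set.Ici 0) :=
      hY₂.continuousOn.add (continuousOn_const.mul hAc')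
    set MA : ℝ := sSup ((fun s => |A s - A' s|) '' Set.Icc 0 t) with hMAdef
    set MG : ℝ := sSup ((fun s => |Γ s - Γ' s|) '' Set.Icc 0 t) with hMGdef
    have hne : (Set.Icc (0:ℝ) t).Nonempty := Set.nonempty_Icc.2 ht
    have bddMA : BddAbove ((fun s => |A s - A' s|) '' Set.Icc 0 t) :=
      isCompact_Icc.bddAbove_image
        (((hAc.mono Set.Icc_subset_Ici_self).sub (hAc'.mono Set.Icc_subset_Ici_self)).abs)
    have bddMG : BddAbove ((fun s => |Γ s - Γ' s|) '' Set.Icc 0 t) :=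
      isCompact_Icc.bddAbove_image
        (((hΓc.mono Set.Icc_subset_Ici_self).sub (hΓc'.mono Set.Icc_subset_Ici_self)).abs)
    have hMA0 : 0 ≤ MA :=
      le_trans (abs_nonneg (A 0 - A' 0))
        (le_csSup bddMA (Set.mem_image_of_mem _ ⟨le_refl 0, ht⟩))
    have hMG0 : 0 ≤ MG :=
      le_trans (abs_nonneg (Γ 0 - Γ' 0))
        (le_csSup bddMG (Set.mem_image_of_mem _ ⟨le_refl 0, ht⟩))
    have hMAle : MA ≤ q₁ * MG := by
      apply csSup_le (hne.image _)
      rintro x ⟨s, hs, rfl⟩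
      have e1 : A s = SkorokhodAux.runSup (fun u => Y₁ u + q₁ * Γ u) s := hAeq s hs.1
      have e2 : A' s = SkorokhodAux.runSup (fun u => Y₁ u + q₁ * Γ' u) s := hAeq' s hs.1
      show |A s - A' s| ≤ q₁ * MG
      rw [e1, e2]
      apply SkorokhodAux.abs_runSup_sub_le hGΓ hGΓ' hs.1 (mul_nonneg hq₁ hMG0)
      intro u hu
      have hmem : |Γ u - Γ' u| ≤ MG :=
        le_csSup bddMG (Set.mem_image_of_mem _ ⟨hu.1, le_trans hu.2 hs.2⟩)
      have heq : (Y₁ u + q₁ * Γ u) - (Y₁ u + q₁ * Γ' u) = q₁ * (Γ u - Γ' u) := by ring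
      rw [heq, abs_mul, abs_of_nonneg hq₁]
      exact mul_le_mul_of_nonneg_left hmem hq₁
    have hMGle : MG ≤ q₂ * MA := by
      apply csSup_le (hne.image _)
      rintro x ⟨s, hs, rfl⟩
      have e1 : Γ s = SkorokhodAux.runSup (fun u => Y₂ u + q₂ * A u) s := hΓeq s hs.1
      have e2 : Γ' s = SkorokhodAux.runSup (fun u => Y₂ u + q₂ * A' u) s := hΓeq' s hs.1
      show |Γ s - Γ' s| ≤ q₂ * MA
      rw [e1, e2]
      apply SkorokhodAux.abs_runSup_sub_le hFA hFA' hs.1 (mul_nonneg hq₂ hMA0)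
      intro u hu
      have hmem : |A u - A' u| ≤ MA :=
        le_csSup bddMA (Set.mem_image_of_mem _ ⟨hu.1, le_trans hu.2 hs.2⟩)
      have heq : (Y₂ u + q₂ * A u) - (Y₂ u + q₂ * A' u) = q₂ * (A u - A' u) := by ring
      rw [heq, abs_mul, abs_of_nonneg hq₂]
      exact mul_le_mul_of_nonneg_left hmem hq₂
    have hMAzero : MA = 0 := by nlinarith
    have hMGzero : MG = 0 := by nlinarith
    constructor
    · have h1 : |A t - A' t| ≤ MA :=
        le_csSup bddMA (Set.mem_image_of_mem _ ⟨ht, le_refl t⟩)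
      rw [hMAzero] at h1
      have := le_antisymm h1 (abs_nonneg _)
      exact sub_eq_zero.1 (abs_eq_zero.1 this)
    · have h1 : |Γ t - Γ' t| ≤ MG :=
        le_csSup bddMG (Set.mem_image_of_mem _ ⟨ht, le_refl t⟩)
      rw [hMGzero] at h1
      have := le_antisymm h1 (abs_nonneg _)
      exact sub_eq_zero.1 (abs_eq_zero.1 this)
end SkorokhodAux
end

section
/- Let δ₁, δ₂, δ₃, x₁, x₂, x₃, r be real numbers, T > 0, let W : [0,T] → ℝ be any function with W(0) = 0, and let A, Γ : [0,T] → ℝ be nondecreasing with A(0) = Γ(0) = 0. Define R₁(t) := x₁ + δ₁t + A(t)/2, R₂(t) := x₂ + δ₂t + W(t) − A(t)/2 + Γ(t)/2, R₃(t) := x₃ + δ₃t − Γ(t)/2, and δ̄ := (δ₁+δ₂+δ₃)/3. Assume R₃(t) ≤ R₂(t) ≤ R₁(t) for all t ∈ [0,T] and R₁(T) = R₂(T) = R₃(T) = r. Then δ₁ ≤ δ₃, and for every t ∈ [0,T): 3(δ₁ − δ̄)(T−t) ≤ W(T) − W(t) ≤ 3(δ₃ − δ̄)(T−t). -/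
/-- Deterministic core of "two ballistic motions cannot squeeze a diffusive one":
if the ranked paths `R₁ ≥ R₂ ≥ R₃` (leader and laggard ballistic with local-time
corrections `A, Γ`, middle driven by `W`) collide at time `T`, then `δ₁ ≤ δ₃`
and the increments of `W` satisfy the two-sided linear bound
`3(δ₁ − δ̄)(T−t) ≤ W T − W t ≤ 3(δ₃ − δ̄)(T−t)` for all `t ∈ [0,T)`. -/
theorem no_triple_collision_core
    (δ₁ δ₂ δ₃ x₁ x₂ x₃ r T : ℝ) (hT : 0 < T)
    (W A Γ : ℝ → ℝ) (hW0 : W 0 = 0)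
    (hA : MonotoneOn A (Set.Icc 0 T)) (hΓ : MonotoneOn Γ (Set.Icc 0 T))
    (hA0 : A 0 = 0) (hΓ0 : Γ 0 = 0)
    (R₁ R₂ R₃ : ℝ → ℝ)
    (hR₁ : ∀ t, R₁ t = x₁ + δ₁ * t + A t / 2)
    (hR₂ : ∀ t, R₂ t = x₂ + δ₂ * t + W t - A t / 2 + Γ t / 2)
    (hR₃ : ∀ t, R₃ t = x₃ + δ₃ * t - Γ t / 2)
    (horder : ∀ t ∈ Set.Icc 0 T, R₃ t ≤ R₂ t ∧ R₂ t ≤ R₁ t)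
    (hcoll : R₁ T = r ∧ R₂ T = r ∧ R₃ T = r) :
    δ₁ ≤ δ₃ ∧
    ∀ t ∈ Set.Ico 0 T,
      3 * (δ₁ - (δ₁ + δ₂ + δ₃) / 3) * (T - t) ≤ W T - W t ∧
      W T - W t ≤ 3 * (δ₃ - (δ₁ + δ₂ + δ₃) / 3) * (T - t) := by
  obtain ⟨h1, h2, h3⟩ := hcoll
  have key : ∀ t ∈ Set.Ico (0:ℝ) T,
      3 * (δ₁ - (δ₁ + δ₂ + δ₃) / 3) * (T - t) ≤ W T - W t ∧
      W T - W t ≤ 3 * (δ₃ - (δ₁ + δ₂ + δ₃) / 3) * (T - t) := by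
    intro t ht
    have htT : t ≤ T := ht.2.le
    have hmem : t ∈ Set.Icc (0:ℝ) T := ⟨ht.1, htT⟩
    have hTmem : T ∈ Set.Icc (0:ℝ) T := ⟨hT.le, le_rfl⟩
    have hAle : A t ≤ A T := hA hmem hTmem htT
    have hΓle : Γ t ≤ Γ T := hΓ hmem hTmem htT
    obtain ⟨ho1, ho2⟩ := horder t hmem
    have e1 := hR₁ t
    have e2 := hR₂ t
    have e3 := hR₃ t
    have f1 := hR₁ T
    have f2 := hR₂ T
    have f3 := hR₃ T
    constructor <;> nlinarith [ho1, ho2, hAle, hΓle]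
  refine ⟨?_, key⟩
  obtain ⟨k1, k2⟩ := key 0 ⟨le_rfl, hT⟩
  nlinarith [k1, k2]
end

section
/- Let λ₁ > 0 and λ₂ > 0 satisfy m := min(λ₁, λ₂) > 1/6, and set κ := (3/8)m − 1/16 > 0. For (g,h) ∈ [0,∞)² with (g,h) ≠ (0,0) put r := √(g² + gh + h²), V(g,h) := exp(r), and 𝒜V(g,h) := V(g,h)/(2r) · (1 − (3/2)(λ₁g + λ₂h)) + V(g,h)(g−h)²/(8r²) − V(g,h)(g−h)²/(8r³). Then for every ε > 0 there exist constants a ≥ ε and b > 0 such that 𝒜V(g,h) ≤ −κ·V(g,h) + b·𝟙{g+h ≤ a} for every (g,h) ∈ [0,∞)² with g + h ≥ ε. -/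
set_option maxHeartbeats 1000000

/-- Lyapunov drift inequality (Proposition 2.5): with `V(g,h) = exp √(g²+gh+h²)` and
drift `𝒜V` of the gap process, for `min(λ₁,λ₂) > 1/6` and `κ = (3/8)min(λ₁,λ₂) − 1/16`
one has `𝒜V ≤ −κ V + b · 𝟙{g+h ≤ a}` away from the origin. -/
theorem lyapunov_drift_inequality
    (l₁ l₂ κ : ℝ) (hl₁ : 0 < l₁) (hl₂ : 0 < l₂)
    (hm : 1 / 6 < min l₁ l₂) (hκ : κ = 3 / 8 * min l₁ l₂ - 1 / 16) :
    0 < κ ∧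
    ∀ ε > (0 : ℝ), ∃ a ≥ ε, ∃ b > (0 : ℝ),
      ∀ g h r : ℝ, 0 ≤ g → 0 ≤ h → ε ≤ g + h →
        r = Real.sqrt (g ^ 2 + g * h + h ^ 2) →
        Real.exp r / (2 * r) * (1 - 3 / 2 * (l₁ * g + l₂ * h))
            + Real.exp r * (g - h) ^ 2 / (8 * r ^ 2)
            - Real.exp r * (g - h) ^ 2 / (8 * r ^ 3)
          ≤ -κ * Real.exp r + (if g + h ≤ a then b else 0) := by
  set m := min l₁ l₂ with hmdef
  clear_value m
  have hml₁ : m ≤ l₁ := by rw [hmdef]; exact min_le_left _ _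
  have hml₂ : m ≤ l₂ := by rw [hmdef]; exact min_le_right _ _
  have hκ0 : 0 < κ := by rw [hκ]; linarith
  subst hκ
  refine ⟨hκ0, ?_⟩
  intro ε hε
  set κ := 3 / 8 * m - 1 / 16 with hκdef
  clear_value κ
  refine ⟨max ε (1/(2*κ)), le_max_left _ _,
    Real.exp (max ε (1/(2*κ))) * (1/ε + 1/8 + κ), by positivity, ?_⟩
  intro g h r hg hh hgh hr
  set a := max ε (1/(2*κ)) with hadef
  clear_value a
  have harg : (0:ℝ) < g^2 + g*h + h^2 := by nlinarith
  have hrpos : 0 < r := by rw [hr]; exact Real.sqrt_pos.mpr harg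
  have hr2 : r^2 = g^2 + g*h + h^2 := by rw [hr, Real.sq_sqrt harg.le]
  have hrle : r ≤ g + h := by
    rw [hr]
    calc Real.sqrt (g^2+g*h+h^2) ≤ Real.sqrt ((g+h)^2) :=
          Real.sqrt_le_sqrt (by nlinarith)
    _ = g + h := Real.sqrt_sq (by linarith)
  have hrge : ε ≤ 2 * r := by nlinarith [hr2, hgh, hε.le, hrpos.le]
  have hE : 0 < Real.exp r := Real.exp_pos r
  have hL : m * (g+h) ≤ l₁ * g + l₂ * h := by nlinarith [hml₁, hml₂, hg, hh]
  have hgh2 : (g-h)^2 ≤ r^2 := by nlinarith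
  have key : Real.exp r * (g-h)^2/(8*r^2) - Real.exp r * (g-h)^2/(8*r^3)
      ≤ Real.exp r / 8 := by
    have t3 : 0 ≤ Real.exp r * (g-h)^2/(8*r^3) := by positivity
    have t2 : Real.exp r * (g-h)^2/(8*r^2) ≤ Real.exp r / 8 := by
      rw [div_le_div_iff₀ (by positivity) (by norm_num)]
      nlinarith
    linarith
  by_cases hca : g + h ≤ a
  · simp only [hca, if_pos]
    have hEa : Real.exp r ≤ Real.exp a := Real.exp_le_exp.mpr (by linarith)
    have h2r : 0 < Real.exp r / (2*r) := by positivity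
    have t1 : Real.exp r / (2*r) * (1 - 3/2 * (l₁*g + l₂*h)) ≤ Real.exp r / (2*r) := by
      have h1 : 1 - 3/2*(l₁*g+l₂*h) ≤ 1 := by nlinarith
      exact mul_le_of_le_one_right h2r.le h1
    have t1' : Real.exp r / (2*r) ≤ Real.exp a * (1/ε) := by
      rw [div_le_iff₀ (by positivity)]
      have h2 : Real.exp a * (1/ε) * ε ≤ Real.exp a * (1/ε) * (2*r) :=
        mul_le_mul_of_nonneg_left hrge (by positivity)
      have h3 : Real.exp a * (1/ε) * ε = Real.exp a := by field_simp
      linarith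
    have hκE : κ * Real.exp r ≤ κ * Real.exp a :=
      mul_le_mul_of_nonneg_left hEa hκ0.le
    linarith [key, t1, t1', hκE, hEa]
  · simp only [hca, if_neg, not_false_iff]
    have haub : 1/(2*κ) ≤ a := hadef ▸ le_max_right ε _
    have hsa : 1/(2*κ) ≤ g + h := le_trans haub (le_of_not_ge hca)
    have h1 : 1 ≤ (g+h) * (2*κ) := (div_le_iff₀ (by positivity)).mp hsa
    have t1 : Real.exp r/(2*r) * (1 - 3/2*(l₁*g+l₂*h)) ≤ -(κ + 1/8) * Real.exp r := by
      rw [div_mul_eq_mul_div, div_le_iff₀ (by positivity)]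
      have hc : (0:ℝ) ≤ κ + 1/8 := by linarith
      have hp1 : 0 ≤ (κ+1/8) * (2*(g+h) - 2*r) := mul_nonneg hc (by linarith)
      have hp3 : κ*(g+h) = (3/8*m-1/16)*(g+h) := by rw [hκdef]
      have h4 : 1 - 3/2*(l₁*g+l₂*h) ≤ -(κ+1/8)*(2*r) := by nlinarith [hp1, hp3, h1, hL]
      nlinarith
    linarith [key, t1]
end

section
/- Let λ > 0 and β > 0, and let σ : (0,∞) → [0,∞) be locally Lebesgue-integrable. Suppose that for every ξ > 0: β·e^{−βξ} = λ·(2e^{−λξ} − ∫₀^ξ e^{−λ(ξ−z)} σ(z) dz). Then β = 2λ and σ(ξ) = 2λ·e^{−2λξ} for Lebesgue-almost every ξ > 0; in particular ∫₀^∞ ξ·β e^{−βξ} dξ = 1/(2λ). -/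
open MeasureTheory

/-- Remark 2.9: if the exponential density `β e^{−βξ}` satisfies the renewal-type
identity `β e^{−βξ} = λ (2 e^{−λξ} − ∫₀^ξ e^{−λ(ξ−z)} σ(z) dz)` for all `ξ > 0`,
then necessarily `β = 2λ` and `σ(ξ) = 2λ e^{−2λξ}` a.e.; in particular the mean
of the exponential law is `1/(2λ)`. -/
theorem exponential_marginal_forced
    (lam β : ℝ) (hlam : 0 < lam) (hβ : 0 < β)
    (σ : ℝ → ℝ) (hσnn : ∀ z > (0 : ℝ), 0 ≤ σ z)
    (hσint : ∀ ξ > (0 : ℝ), IntegrableOn σ (Set.Ioc 0 ξ))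
    (heq : ∀ ξ > (0 : ℝ),
      β * Real.exp (-β * ξ) =
        lam * (2 * Real.exp (-lam * ξ)
          - ∫ z in Set.Ioc (0 : ℝ) ξ, Real.exp (-lam * (ξ - z)) * σ z)) :
    β = 2 * lam ∧
    (∀ᵐ ξ ∂(volume : Measure ℝ), 0 < ξ → σ ξ = 2 * lam * Real.exp (-2 * lam * ξ)) ∧
    (∫ ξ in Set.Ioi (0 : ℝ), ξ * (β * Real.exp (-β * ξ))) = 1 / (2 * lam) := by
  open Set Filter in
  -- Step 1: the key integral identity for `I ξ = ∫_{(0,ξ]} e^{λz} σ z`.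
  have hI : ∀ ξ > (0:ℝ), (∫ z in Set.Ioc (0:ℝ) ξ, Real.exp (lam * z) * σ z)
      = 2 - (β / lam) * Real.exp ((lam - β) * ξ) := by
    intro ξ hξ
    have h1 := heq ξ hξ
    have hrw : (∫ z in Set.Ioc (0 : ℝ) ξ, Real.exp (-lam * (ξ - z)) * σ z)
        = Real.exp (-lam * ξ) * ∫ z in Set.Ioc (0:ℝ) ξ, Real.exp (lam * z) * σ z := by
      rw [← integral_const_mul]
      refine setIntegral_congr_fun measurableSet_Ioc (fun z hz => ?_)
      rw [← mul_assoc, ← Real.exp_add]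
      ring_nf
    rw [hrw] at h1
    have hexp : Real.exp (-lam * ξ) * Real.exp ((lam - β) * ξ) = Real.exp (-β * ξ) := by
      rw [← Real.exp_add]; ring_nf
    have he : Real.exp (-lam * ξ) ≠ 0 := Real.exp_ne_zero _
    field_simp
    nlinarith [h1, hexp, Real.exp_pos (-lam * ξ)]
  -- abbreviation
  set g : ℝ → ℝ := fun z => Real.exp (lam * z) * σ z with hgdef
  have hgint : ∀ ξ > (0:ℝ), IntegrableOn g (Set.Ioc 0 ξ) := by
    intro ξ hξ
    have h1 : IntegrableOn σ (Set.Icc (0:ℝ) ξ) := by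
      rw [integrableOn_Icc_iff_integrableOn_Ioc]; exact hσint ξ hξ
    exact (IntegrableOn.continuousOn_mul
      ((Real.continuous_exp.comp (continuous_const.mul continuous_id)).continuousOn)
      h1 isCompact_Icc).mono_set Set.Ioc_subset_Icc_self
  -- Step 2: β = 2λ, by letting ξ → 0⁺ in the identity.
  have hβ2 : β = 2 * lam := by
    have hseq : ∀ n : ℕ, (∫ z in Set.Ioc (0:ℝ) (1/(n+1)), g z)
        = ∫ z in Set.Ioc (0:ℝ) 1, (Set.Ioc (0:ℝ) (1/(n+1))).indicator g z := by
      intro n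
      rw [integral_indicator measurableSet_Ioc, Measure.restrict_restrict measurableSet_Ioc]
      congr 1
      rw [Set.Ioc_inter_Ioc]
      have h1 : (1:ℝ) ≤ (n:ℝ) + 1 := by linarith [Nat.cast_nonneg (α := ℝ) n]
      have : (1:ℝ)/((n:ℝ)+1) ⊓ 1 = 1/((n:ℝ)+1) := by
        rw [inf_eq_left, div_le_one (by positivity)]; exact h1
      rw [sup_eq_left.mpr le_rfl, this]
    have hgint1 : IntegrableOn g (Set.Ioc 0 1) := hgint 1 one_pos
    have hlim1 : Tendsto (fun n : ℕ => ∫ z in Set.Ioc (0:ℝ) (1/(n+1)), g z) atTop (nhds 0) := by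
      simp_rw [hseq]
      have := MeasureTheory.tendsto_integral_of_dominated_convergence
        (μ := volume.restrict (Set.Ioc (0:ℝ) 1))
        (F := fun n z => (Set.Ioc (0:ℝ) (1/(n+1))).indicator g z)
        (f := fun _ => (0:ℝ)) (bound := fun z => |g z|)
        (fun n => hgint1.aestronglyMeasurable.indicator measurableSet_Ioc)
        hgint1.abs
        (fun n => Filter.Eventually.of_forall (fun z => by
          calc ‖(Set.Ioc (0:ℝ) (1/(n+1))).indicator g z‖ ≤ ‖g z‖ :=
                norm_indicator_le_norm_self g z
            _ = |g z| := Real.norm_eq_abs _))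
        ?_
      · simpa using this
      · filter_upwards [ae_restrict_mem measurableSet_Ioc] with z hz
        have hz0 : 0 < z := hz.1
        have : ∀ᶠ n : ℕ in atTop, (Set.Ioc (0:ℝ) (1/(n+1))).indicator g z = 0 := by
          have h2 : Tendsto (fun n : ℕ => 1/((n:ℝ)+1)) atTop (nhds 0) :=
            tendsto_one_div_add_atTop_nhds_zero_nat
          filter_upwards [h2.eventually (eventually_lt_nhds hz0)] with n hn
          apply Set.indicator_of_notMem
          intro hmem
          exact absurd hmem.2 (not_le.mpr hn)
        exact Tendsto.congr' (this.mono fun n h => h.symm) tendsto_const_nhds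
    have hlim2 : Tendsto (fun n : ℕ => ∫ z in Set.Ioc (0:ℝ) (1/(n+1)), g z) atTop
        (nhds (2 - β / lam)) := by
      have hpos : ∀ n : ℕ, (0:ℝ) < 1/(n+1) := fun n => by positivity
      have heqn : ∀ n : ℕ, (∫ z in Set.Ioc (0:ℝ) (1/(n+1)), g z)
          = 2 - (β / lam) * Real.exp ((lam - β) * (1/(n+1))) := fun n => hI _ (hpos n)
      simp_rw [heqn]
      have hc : Continuous (fun x : ℝ => 2 - (β / lam) * Real.exp ((lam - β) * x)) :=
        continuous_const.sub (continuous_const.mul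
          (Real.continuous_exp.comp (continuous_const.mul continuous_id)))
      have h2 : Tendsto (fun n : ℕ => 1/((n:ℝ)+1)) atTop (nhds 0) :=
        tendsto_one_div_add_atTop_nhds_zero_nat
      have := (hc.tendsto 0).comp h2
      simpa [Function.comp_def] using this
    have := tendsto_nhds_unique hlim1 hlim2
    have hlam' : lam ≠ 0 := ne_of_gt hlam
    field_simp at this
    linarith
  -- the identity with β = 2λ substituted
  have hI' : ∀ ξ > (0:ℝ), (∫ z in Set.Ioc (0:ℝ) ξ, Real.exp (lam * z) * σ z)
      = 2 - 2 * Real.exp (-lam * ξ) := by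
    intro ξ hξ
    have := hI ξ hξ
    rw [hβ2] at this
    have hb : 2 * lam / lam = 2 := by field_simp
    rw [hb] at this
    have harg : (lam - 2 * lam) * ξ = -lam * ξ := by ring
    rwa [harg] at this
  refine ⟨hβ2, ?_, ?_⟩
  -- Step 3: σ = 2λ e^{−2λξ} a.e. on (0,∞).
  · set h : ℝ → ℝ := fun z => 2 * lam * Real.exp (-lam * z) with hhdef
    have hH : ∀ ξ > (0:ℝ), (∫ z in Set.Ioc (0:ℝ) ξ, h z) = 2 - 2 * Real.exp (-lam * ξ) := by
      intro ξ hξ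
      have hcont : Continuous h :=
        continuous_const.mul (Real.continuous_exp.comp (continuous_const.mul continuous_id))
      have hderiv : ∀ z ∈ Set.uIcc (0:ℝ) ξ,
          HasDerivAt (fun z => -2 * Real.exp (-lam * z)) (h z) z := by
        intro z _
        have h1 : HasDerivAt (fun z : ℝ => -lam * z) (-lam) z := by
          simpa using (hasDerivAt_id z).const_mul (-lam)
        have h3 := h1.exp.const_mul (-2 : ℝ)
        have e : h z = -2 * (Real.exp (-lam * z) * -lam) := by
          show 2 * lam * Real.exp (-lam * z) = _; ring
        rw [e]; exact h3
      have := intervalIntegral.integral_eq_sub_of_hasDerivAt hderiv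
        (hcont.intervalIntegrable 0 ξ)
      rw [intervalIntegral.integral_of_le hξ.le] at this
      rw [this]
      simp [Real.exp_zero]
      ring
    set μ := (volume : Measure ℝ).restrict (Set.Ioi 0) with hμ
    set fE : ℝ → ENNReal := fun z => ENNReal.ofReal (g z) with hfE
    set hE : ℝ → ENNReal := fun z => ENNReal.ofReal (h z) with hhE
    have hgm : AEStronglyMeasurable g μ := by
      have : Set.Ioi (0:ℝ) = ⋃ n : ℕ, Set.Ioc (0:ℝ) (n+1) := by
        ext x
        simp only [Set.mem_Ioi, Set.mem_iUnion, Set.mem_Ioc]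
        constructor
        · intro hx
          obtain ⟨n, hn⟩ := exists_nat_ge x
          exact ⟨n, hx, by linarith⟩
        · rintro ⟨n, hn, _⟩; exact hn
      rw [hμ, this, aestronglyMeasurable_iUnion_iff]
      intro n
      exact (hgint (n+1) (by positivity)).aestronglyMeasurable
    have hfEm : AEMeasurable fE μ := hgm.aemeasurable.ennreal_ofReal
    have hhEm : AEMeasurable hE μ := by
      apply Measurable.aemeasurable
      exact (measurable_const.mul
        (Real.measurable_exp.comp (measurable_const.mul measurable_id))).ennreal_ofReal
    set ν₁ := μ.withDensity fE with hν₁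
    set ν₂ := μ.withDensity hE with hν₂
    have key : ∀ ξ : ℝ, 0 ≤ ξ →
        ν₁ (Set.Ioc 0 ξ) = ENNReal.ofReal (2 - 2 * Real.exp (-lam * ξ))
        ∧ ν₂ (Set.Ioc 0 ξ) = ENNReal.ofReal (2 - 2 * Real.exp (-lam * ξ)) := by
      intro ξ hξ
      rcases eq_or_lt_of_le hξ with rfl | hξ'
      · simp [hν₁, hν₂]
      have hrr : μ.restrict (Set.Ioc (0:ℝ) ξ) = volume.restrict (Set.Ioc (0:ℝ) ξ) := by
        rw [hμ, Measure.restrict_restrict measurableSet_Ioc]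
        congr 1
        rw [Set.Ioc_inter_Ioi]
        simp
      constructor
      · rw [hν₁, withDensity_apply _ measurableSet_Ioc, hrr,
          ← ofReal_integral_eq_lintegral_ofReal (hgint ξ hξ')
            ((ae_restrict_iff' measurableSet_Ioc).2 (Filter.Eventually.of_forall
              (fun z hz => mul_nonneg (Real.exp_pos _).le (hσnn z hz.1)))),
          hI' ξ hξ']
      · have hhc : Continuous h := continuous_const.mul
          (Real.continuous_exp.comp (continuous_const.mul continuous_id))
        have hhint : IntegrableOn h (Set.Ioc (0:ℝ) ξ) := hhc.integrableOn_Ioc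
        have hhnn : (0:ℝ → ℝ) ≤ᵐ[volume.restrict (Set.Ioc (0:ℝ) ξ)] h :=
          Filter.Eventually.of_forall (fun z => by
            simp only [hhdef, Pi.zero_apply]; positivity)
        rw [hν₂, withDensity_apply _ measurableSet_Ioc, hrr,
          ← ofReal_integral_eq_lintegral_ofReal hhint hhnn, hH ξ hξ']
    have keyIoc : ∀ ⦃a b : ℝ⦄, a < b → ν₁ (Set.Ioc a b) = ν₂ (Set.Ioc a b) := by
      intro a b _
      have hinter : ∀ (f : ℝ → ENNReal), (μ.withDensity f) (Set.Ioc a b)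
          = (μ.withDensity f) (Set.Ioc (max a 0) b) := by
        intro f
        rw [withDensity_apply _ measurableSet_Ioc, withDensity_apply _ measurableSet_Ioc,
          hμ, Measure.restrict_restrict measurableSet_Ioc,
          Measure.restrict_restrict measurableSet_Ioc,
          Set.Ioc_inter_Ioi, Set.Ioc_inter_Ioi]
        congr 2
        simp [max_assoc]
      rw [hν₁, hν₂, hinter fE, hinter hE, ← hν₁, ← hν₂]
      set a' := max a 0 with ha'
      have ha'0 : 0 ≤ a' := le_max_right a 0
      rcases le_or_gt b a' with hba | hab
      · rw [Set.Ioc_eq_empty (not_lt.mpr hba)]; simp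
      · have hb0 : 0 < b := lt_of_le_of_lt ha'0 hab
        have hsplit : Set.Ioc (0:ℝ) a' ∪ Set.Ioc a' b = Set.Ioc 0 b :=
          Set.Ioc_union_Ioc_eq_Ioc ha'0 hab.le
        have hdisj : Disjoint (Set.Ioc (0:ℝ) a') (Set.Ioc a' b) := Set.Ioc_disjoint_Ioc_of_le le_rfl
        have hadd : ∀ ν : Measure ℝ, ν (Set.Ioc (0:ℝ) a') + ν (Set.Ioc a' b) = ν (Set.Ioc 0 b) := by
          intro ν
          rw [← measure_union hdisj measurableSet_Ioc, hsplit]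
        have h1 := hadd ν₁
        have h2 := hadd ν₂
        have e0 := key a' ha'0
        have eb := key b hb0.le
        have hfin : ν₁ (Set.Ioc (0:ℝ) a') ≠ ⊤ := by rw [e0.1]; exact ENNReal.ofReal_ne_top
        have : ν₁ (Set.Ioc (0:ℝ) a') + ν₁ (Set.Ioc a' b)
            = ν₁ (Set.Ioc (0:ℝ) a') + ν₂ (Set.Ioc a' b) := by
          rw [h1, e0.1, ← e0.2, h2, eb.1, ← eb.2]
        exact (ENNReal.add_right_inj hfin).mp this
    have hfin : ∀ ⦃a b : ℝ⦄, a < b → ν₁ (Set.Ioc a b) ≠ ⊤ := by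
      intro a b _
      have hsub : Set.Ioc a b ∩ Set.Ioi 0 ⊆ Set.Ioc (0:ℝ) (max b 1) := by
        rintro x ⟨hx1, hx2⟩
        exact ⟨hx2, le_max_of_le_left hx1.2⟩
      have hle : ν₁ (Set.Ioc a b) ≤ ν₁ (Set.Ioc (0:ℝ) (max b 1)) := by
        rw [hν₁, withDensity_apply _ measurableSet_Ioc, withDensity_apply _ measurableSet_Ioc,
          hμ, Measure.restrict_restrict measurableSet_Ioc,
          Measure.restrict_restrict measurableSet_Ioc]
        apply lintegral_mono_set
        calc Set.Ioc a b ∩ Set.Ioi 0 ⊆ Set.Ioc (0:ℝ) (max b 1) := hsub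
          _ ⊆ Set.Ioc (0:ℝ) (max b 1) ∩ Set.Ioi 0 := by
              intro x hx; exact ⟨hx, hx.1⟩
      have hO := (key (max b 1) (le_max_of_le_right zero_le_one)).1
      intro htop
      rw [htop, hO] at hle
      exact ENNReal.ofReal_ne_top (top_le_iff.mp hle)
    have hext : ν₁ = ν₂ := Measure.ext_of_Ioc' ν₁ ν₂ hfin keyIoc
    have hae : fE =ᵐ[μ] hE := by
      rw [← withDensity_eq_iff_of_sigmaFinite hfEm hhEm]
      exact hext
    have hae2 : ∀ᵐ z ∂(volume : Measure ℝ), z ∈ Set.Ioi (0:ℝ) → fE z = hE z :=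
      ae_imp_of_ae_restrict hae
    filter_upwards [hae2] with z hz hz0
    have h1 : fE z = hE z := hz hz0
    have hgnn : 0 ≤ g z := mul_nonneg (Real.exp_pos _).le (hσnn z hz0)
    have hhnn : 0 ≤ h z := by simp only [hhdef]; positivity
    have h2 : g z = h z := by
      rwa [hfE, hhE, ENNReal.ofReal_eq_ofReal_iff hgnn hhnn] at h1
    have hexpnz : Real.exp (lam * z) ≠ 0 := Real.exp_ne_zero _
    have h2' : Real.exp (lam * z) * σ z = 2 * lam * Real.exp (-lam * z) := h2
    have e4 : Real.exp (lam * z) * Real.exp (-2 * lam * z) = Real.exp (-lam * z) := by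
      rw [← Real.exp_add]; ring_nf
    apply mul_left_cancel₀ hexpnz
    rw [h2']
    linear_combination (-2 * lam) * e4
  -- Step 4: the mean of the exponential law.
  · have h1 : (∫ ξ in Set.Ioi (0 : ℝ), ξ * (β * Real.exp (-β * ξ)))
        = β * ∫ ξ in Set.Ioi (0:ℝ), ξ ^ ((2:ℝ) - 1) * Real.exp (-(β * ξ)) := by
      rw [← integral_const_mul]
      refine setIntegral_congr_fun measurableSet_Ioi (fun x _ => ?_)
      have : (2:ℝ) - 1 = 1 := by norm_num
      rw [this, Real.rpow_one]
      ring_nf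
    rw [h1, Real.integral_rpow_mul_exp_neg_mul_Ioi (by norm_num : (0:ℝ) < 2) hβ]
    have h2 : Real.Gamma 2 = 1 := by
      have := Real.Gamma_nat_eq_factorial 1
      norm_num at this
      convert this using 2
      norm_num
    rw [h2]
    have : (1/β) ^ (2:ℝ) = (1/β)^(2:ℕ) := by
      rw [← Real.rpow_natCast]; norm_num
    rw [this, hβ2]
    have h2lam : (2:ℝ) * lam ≠ 0 := by positivity
    field_simp
end

section
/- Let λ > 0, let u > 1 satisfy 2u·log(u/(u−1)) = 3·log 2, let σ(ξ) := ((λu)^{2u/3}/Γ(2u/3)) · ξ^{2u/3−1} e^{−λuξ} for ξ > 0, and define τ(ξ) := λ·e^{−λξ} · ∫_ξ^∞ e^{λz} σ(z) dz for ξ > 0. Then ∫₀^∞ τ(ξ) dξ = 1 and ∫₀^∞ ξ·τ(ξ) dξ = 1/(3λ). -/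
open MeasureTheory Set Filter Topology

lemma aux_integrableOn {s b : ℝ} (hs : -1 < s) (hb : 0 < b) :
    IntegrableOn (fun x : ℝ => x ^ s * Real.exp (-(b * x))) (Set.Ioi 0) := by
  refine (integrableOn_rpow_mul_exp_neg_mul_rpow hs zero_lt_one hb).congr_fun
    (fun x hx => ?_) measurableSet_Ioi
  simp only [Real.rpow_one, neg_mul]

lemma aux_tendsto {b : ℝ} (hb : 0 < b) (s : ℝ) :
    Filter.Tendsto (fun x : ℝ => x ^ s * Real.exp (-(b * x))) Filter.atTop (nhds 0) := by
  simpa [neg_mul] using tendsto_rpow_mul_exp_neg_mul_atTop_nhds_zero s b hb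

section FProps
variable {a r C : ℝ}

-- F facts packaged
lemma F_split (g : ℝ → ℝ) (hgint : IntegrableOn g (Ioi 0)) {ξ : ℝ} (hξ : 0 ≤ ξ) :
    (∫ z in Ioi ξ, g z) = (∫ z in Ioi (0:ℝ), g z) - ∫ z in Ioc 0 ξ, g z := by
  have hun : Ioc 0 ξ ∪ Ioi ξ = Ioi (0:ℝ) := Ioc_union_Ioi_eq_Ioi hξ
  have := setIntegral_union (Set.Ioc_disjoint_Ioi_same) measurableSet_Ioi
    (hgint.mono_set Ioc_subset_Ioi_self) (hgint.mono_set (Ioi_subset_Ioi hξ)) (f := g) (μ := volume)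
  rw [hun] at this
  rw [this]; ring

lemma F_hasDerivAt (g : ℝ → ℝ) (hgint : IntegrableOn g (Ioi 0))
    (hmeas : Measurable g) {ξ : ℝ} (hξ : 0 < ξ) (hcont : ContinuousAt g ξ) :
    HasDerivAt (fun x => ∫ z in Ioi x, g z) (-(g ξ)) ξ := by
  have hii : IntervalIntegrable g volume 0 ξ := by
    rw [intervalIntegrable_iff_integrableOn_Ioc_of_le hξ.le]
    exact hgint.mono_set Ioc_subset_Ioi_self
  have hG := intervalIntegral.integral_hasDerivAt_right hii
    (hmeas.stronglyMeasurable.stronglyMeasurableAtFilter) hcont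
  have hev : (fun x => ∫ z in Ioi x, g z) =ᶠ[𝓝 ξ]
      fun x => (∫ z in Ioi (0:ℝ), g z) - ∫ t in (0:ℝ)..x, g t := by
    filter_upwards [isOpen_Ioi.mem_nhds hξ] with x (hx : 0 < x)
    rw [F_split g hgint hx.le, intervalIntegral.integral_of_le hx.le]
  exact ((hG.const_sub _).congr_of_eventuallyEq hev)

lemma F_contWithin (g : ℝ → ℝ) (hgint : IntegrableOn g (Ioi 0)) :
    ContinuousWithinAt (fun x => ∫ z in Ioi x, g z) (Ici 0) 0 := by
  have h_int : IntegrableOn g (Icc 0 1) := by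
    rw [integrableOn_Icc_iff_integrableOn_Ioc]
    exact hgint.mono_set Ioc_subset_Ioi_self
  have hcontG : ContinuousOn (fun x => ∫ t in Ioc 0 x, g t) (Icc 0 1) :=
    intervalIntegral.continuousOn_primitive h_int
  have h1 : ContinuousWithinAt
      (fun x => (∫ z in Ioi (0:ℝ), g z) - ∫ t in Ioc 0 x, g t) (Icc 0 1) 0 :=
    continuousWithinAt_const.sub (hcontG 0 ⟨le_refl 0, zero_le_one⟩)
  have h2 : ContinuousWithinAt
      (fun x => (∫ z in Ioi (0:ℝ), g z) - ∫ t in Ioc 0 x, g t) (Ici 0) 0 := by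
    rwa [ContinuousWithinAt, nhdsWithin_Icc_eq_nhdsGE zero_lt_one] at h1
  refine h2.congr (fun y hy => F_split g hgint hy) ?_
  exact F_split g hgint le_rfl

lemma F_le (g : ℝ → ℝ) (hgint : IntegrableOn g (Ioi 0))
    (hg_nonneg : ∀ z : ℝ, 0 ≤ z → 0 ≤ g z) {ξ : ℝ} (hξ : 0 ≤ ξ) :
    0 ≤ (∫ z in Ioi ξ, g z) ∧ (∫ z in Ioi ξ, g z) ≤ ∫ z in Ioi (0:ℝ), g z := by
  constructor
  · exact setIntegral_nonneg measurableSet_Ioi fun z hz => hg_nonneg z (hξ.trans hz.le)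
  · rw [F_split g hgint hξ]
    have : 0 ≤ ∫ z in Ioc 0 ξ, g z :=
      setIntegral_nonneg measurableSet_Ioc fun z hz => hg_nonneg z hz.1.le
    linarith

end FProps



/-- Remark 2.10: with `σ` the Gamma density with parameters `(λu, 2u/3)` where `u > 1`
solves `2u log(u/(u−1)) = 3 log 2`, the function
`τ(ξ) = λ e^{−λξ} ∫_ξ^∞ e^{λz} σ(z) dz` is a probability density on `(0,∞)`
with mean `1/(3λ)`. -/
theorem conjectured_marginal_density_normalization
    (lam u : ℝ) (hlam : 0 < lam) (hu : 1 < u)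
    (hueq : 2 * u * Real.log (u / (u - 1)) = 3 * Real.log 2)
    (σ τ : ℝ → ℝ)
    (hσ : ∀ ξ > (0 : ℝ),
      σ ξ = (lam * u) ^ (2 * u / 3) / Real.Gamma (2 * u / 3)
              * ξ ^ (2 * u / 3 - 1) * Real.exp (-lam * u * ξ))
    (hτ : ∀ ξ > (0 : ℝ),
      τ ξ = lam * Real.exp (-lam * ξ) * ∫ z in Set.Ioi ξ, Real.exp (lam * z) * σ z) :
    (∫ ξ in Set.Ioi (0 : ℝ), τ ξ) = 1 ∧
    (∫ ξ in Set.Ioi (0 : ℝ), ξ * τ ξ) = 1 / (3 * lam) := by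
  have hu0 : (0:ℝ) < u := lt_trans one_pos hu
  have hu1 : (0:ℝ) < u - 1 := sub_pos.mpr hu
  set a : ℝ := 2 * u / 3 with ha_def
  have ha : 0 < a := by positivity
  set r : ℝ := lam * (u - 1) with hr_def
  have hr : 0 < r := mul_pos hlam hu1
  have hlu : 0 < lam * u := mul_pos hlam hu0
  have hΓ : 0 < Real.Gamma a := Real.Gamma_pos_of_pos ha
  set C : ℝ := (lam * u) ^ a / Real.Gamma a with hC_def
  have hC : 0 < C := div_pos (Real.rpow_pos_of_pos hlu a) hΓ
  set g : ℝ → ℝ := fun z => C * (z ^ (a - 1) * Real.exp (-(r * z))) with hg_def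
  have hg_nonneg : ∀ z : ℝ, 0 ≤ z → 0 ≤ g z := fun z hz => by
    have h1 : (0:ℝ) ≤ z ^ (a - 1) := Real.rpow_nonneg hz _
    positivity
  have hgint : IntegrableOn g (Ioi 0) :=
    (aux_integrableOn (by linarith) hr).const_mul C
  have hmeas_g : Measurable g := by fun_prop
  have hcg : ∀ ξ : ℝ, 0 < ξ → ContinuousAt g ξ := fun ξ hξ => by
    have h1 : ContinuousAt (fun z : ℝ => z ^ (a - 1)) ξ :=
      Real.continuousAt_rpow_const ξ _ (Or.inl hξ.ne')
    have h2 : Continuous fun z : ℝ => Real.exp (-(r * z)) :=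
      Real.continuous_exp.comp ((continuous_const.mul continuous_id).neg)
    exact continuousAt_const.mul (h1.mul h2.continuousAt)
  -- the total integral of g
  have hI : ∫ z in Ioi (0:ℝ), g z = 2 := by
    rw [hg_def, integral_const_mul, Real.integral_rpow_mul_exp_neg_mul_Ioi ha hr]
    have h1 : C * ((1 / r) ^ a * Real.Gamma a) = (lam * u) ^ a * (1 / r) ^ a := by
      field_simp [hC_def]
      rw [hC_def, div_mul_cancel₀ _ hΓ.ne']
    rw [h1, ← Real.mul_rpow hlu.le (by positivity)]
    have h2 : lam * u * (1 / r) = u / (u - 1) := by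
      field_simp [hr_def]
      ring
    rw [h2, Real.rpow_def_of_pos (div_pos hu0 hu1)]
    have h3 : Real.log (u / (u - 1)) * a = Real.log 2 := by
      have h4 : Real.log (u / (u - 1)) * a = 2 * u * Real.log (u / (u - 1)) / 3 := by
        rw [ha_def]; ring
      rw [h4, hueq]; ring
    rw [h3, Real.exp_log two_pos]
  set F : ℝ → ℝ := fun x => ∫ z in Ioi x, g z with hF_def
  have hF0 : F 0 = 2 := hI
  -- exp identities
  have hexp1 : ∀ ξ : ℝ, Real.exp (-(lam * ξ)) * Real.exp (-(r * ξ))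
      = Real.exp (-(lam * u * ξ)) := fun ξ => by
    rw [← Real.exp_add]; congr 1; rw [hr_def]; ring
  have hexp2 : ∀ z : ℝ, Real.exp (lam * z) * Real.exp (-lam * u * z)
      = Real.exp (-(r * z)) := fun z => by
    rw [← Real.exp_add]; congr 1; rw [hr_def]; ring
  -- the function e^{-λξ} g ξ  (equal to σ on Ioi 0)
  have hs'_form : (fun ξ : ℝ => Real.exp (-(lam * ξ)) * g ξ)
      = fun ξ => C * (ξ ^ (a - 1) * Real.exp (-(lam * u * ξ))) := by
    funext ξ
    rw [hg_def]
    show Real.exp (-(lam * ξ)) * (C * (ξ ^ (a - 1) * Real.exp (-(r * ξ)))) = _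
    rw [← hexp1 ξ]; ring
  have hs'int : IntegrableOn (fun ξ : ℝ => Real.exp (-(lam * ξ)) * g ξ) (Ioi 0) := by
    rw [hs'_form]
    exact (aux_integrableOn (by linarith) hlu).const_mul C
  have honemul : (lam * u) ^ a * (1 / (lam * u)) ^ a = 1 := by
    rw [← Real.mul_rpow hlu.le (by positivity), mul_one_div_cancel hlu.ne', Real.one_rpow]
  have hs'1 : ∫ ξ in Ioi (0:ℝ), Real.exp (-(lam * ξ)) * g ξ = 1 := by
    rw [hs'_form, integral_const_mul, Real.integral_rpow_mul_exp_neg_mul_Ioi ha hlu]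
    calc C * ((1 / (lam * u)) ^ a * Real.Gamma a)
        = (lam * u) ^ a * (1 / (lam * u)) ^ a * (Real.Gamma a / Real.Gamma a) := by
          rw [hC_def]; ring
      _ = 1 := by rw [honemul, div_self hΓ.ne']; ring
  -- ξ · e^{-λξ} g ξ
  have hxs'_eq : EqOn (fun ξ : ℝ => ξ * (Real.exp (-(lam * ξ)) * g ξ))
      (fun ξ => C * (ξ ^ (a + 1 - 1) * Real.exp (-(lam * u * ξ)))) (Ioi 0) := by
    intro ξ hξ
    have hξ0 : (0:ℝ) < ξ := hξ
    show ξ * (Real.exp (-(lam * ξ)) * g ξ) = _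
    rw [hg_def]
    show ξ * (Real.exp (-(lam * ξ)) * (C * (ξ ^ (a - 1) * Real.exp (-(r * ξ)))))
      = C * (ξ ^ (a + 1 - 1) * Real.exp (-(lam * u * ξ)))
    rw [← hexp1 ξ, add_sub_cancel_right,
      show a = a - 1 + 1 by ring, Real.rpow_add_one hξ0.ne']
    ring_nf
  have hxs'int : IntegrableOn (fun ξ : ℝ => ξ * (Real.exp (-(lam * ξ)) * g ξ)) (Ioi 0) := by
    have h0 : IntegrableOn (fun x : ℝ => C * (x ^ (a + 1 - 1) * Real.exp (-(lam * u * x))))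
        (Ioi 0) := (aux_integrableOn (by linarith : (-1:ℝ) < a + 1 - 1) hlu).const_mul C
    exact h0.congr_fun (fun x hx => (hxs'_eq hx).symm) measurableSet_Ioi
  have hxs'val : ∫ ξ in Ioi (0:ℝ), ξ * (Real.exp (-(lam * ξ)) * g ξ) = 2 / (3 * lam) := by
    rw [setIntegral_congr_fun measurableSet_Ioi hxs'_eq, integral_const_mul,
      Real.integral_rpow_mul_exp_neg_mul_Ioi (by linarith) hlu,
      Real.Gamma_add_one ha.ne', Real.rpow_add_one (by positivity : (1:ℝ)/(lam*u) ≠ 0)]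
    calc C * ((1 / (lam * u)) ^ a * (1 / (lam * u)) * (a * Real.Gamma a))
        = (lam * u) ^ a * (1 / (lam * u)) ^ a * (a * (1 / (lam * u)))
            * (Real.Gamma a / Real.Gamma a) := by rw [hC_def]; ring
      _ = a / (lam * u) := by rw [honemul, div_self hΓ.ne']; ring
      _ = 2 / (3 * lam) := by rw [ha_def]; field_simp
  -- inner integral of τ equals F
  have hinner : ∀ ξ : ℝ, 0 < ξ → (∫ z in Ioi ξ, Real.exp (lam * z) * σ z) = F ξ := by
    intro ξ hξ
    refine setIntegral_congr_fun measurableSet_Ioi (fun z hz => ?_)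
    have hz0 : (0:ℝ) < z := hξ.trans hz
    rw [hσ z hz0, hg_def]
    show Real.exp (lam * z) * (C * z ^ (a - 1) * Real.exp (-lam * u * z))
      = C * (z ^ (a - 1) * Real.exp (-(r * z)))
    rw [← hexp2 z]; ring
  have he : ∀ ξ : ℝ, HasDerivAt (fun x : ℝ => Real.exp (-(lam * x)))
      (Real.exp (-(lam * ξ)) * -lam) ξ := by
    intro ξ
    have h1 : HasDerivAt (fun x : ℝ => -(lam * x)) (-lam) ξ := by
      simpa using ((hasDerivAt_id ξ).const_mul lam).fun_neg
    exact h1.exp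
  have hFd : ∀ ξ : ℝ, 0 < ξ → HasDerivAt F (-(g ξ)) ξ := fun ξ hξ =>
    F_hasDerivAt g hgint hmeas_g hξ (hcg ξ hξ)
  have hFnonneg : ∀ ξ : ℝ, 0 ≤ ξ → 0 ≤ F ξ := fun ξ hξ => (F_le g hgint hg_nonneg hξ).1
  have hFle : ∀ ξ : ℝ, 0 ≤ ξ → F ξ ≤ 2 := fun ξ hξ => hI ▸ (F_le g hgint hg_nonneg hξ).2
  have h0tend : Tendsto (fun x : ℝ => Real.exp (-(lam * x))) atTop (𝓝 0) := by
    simpa [Real.rpow_zero] using aux_tendsto hlam 0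
  have h1tend : Tendsto (fun x : ℝ => x * Real.exp (-(lam * x))) atTop (𝓝 0) := by
    simpa [Real.rpow_one] using aux_tendsto hlam 1
  set T : ℝ → ℝ := fun ξ => lam * Real.exp (-(lam * ξ)) * F ξ with hT_def
  -- Part 1
  have hHderiv : ∀ ξ ∈ Ioi (0:ℝ), HasDerivAt (fun x => -(Real.exp (-(lam * x)) * F x))
      (T ξ + Real.exp (-(lam * ξ)) * g ξ) ξ := by
    intro ξ hξ
    have h2 := ((he ξ).fun_mul (hFd ξ hξ)).fun_neg
    refine h2.congr_deriv ?_
    rw [hT_def]; ring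
  have hpos1 : ∀ ξ ∈ Ioi (0:ℝ), 0 ≤ T ξ + Real.exp (-(lam * ξ)) * g ξ := by
    intro ξ hξ
    have h2 := hFnonneg ξ (le_of_lt hξ)
    have h3 := hg_nonneg ξ (le_of_lt hξ)
    have h4 := (Real.exp_pos (-(lam * ξ))).le
    rw [hT_def]
    exact add_nonneg (mul_nonneg (mul_nonneg hlam.le h4) h2) (mul_nonneg h4 h3)
  have hHcont : ContinuousWithinAt (fun x => -(Real.exp (-(lam * x)) * F x)) (Ici 0) 0 := by
    have hc : Continuous fun x : ℝ => Real.exp (-(lam * x)) :=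
      Real.continuous_exp.comp ((continuous_const.mul continuous_id).neg)
    exact (hc.continuousWithinAt.mul (F_contWithin g hgint)).neg
  have hHtend : Tendsto (fun x : ℝ => -(Real.exp (-(lam * x)) * F x)) atTop (𝓝 0) := by
    apply squeeze_zero_norm' (a := fun x : ℝ => 2 * Real.exp (-(lam * x)))
    · filter_upwards [eventually_ge_atTop (0:ℝ)] with x hx
      have h2 := hFnonneg x hx
      have h4 := (Real.exp_pos (-(lam * x))).le
      rw [norm_neg, Real.norm_eq_abs, abs_of_nonneg (mul_nonneg h4 h2)]
      calc Real.exp (-(lam * x)) * F x ≤ Real.exp (-(lam * x)) * 2 :=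
            mul_le_mul_of_nonneg_left (hFle x hx) h4
        _ = 2 * Real.exp (-(lam * x)) := by ring
    · simpa using h0tend.const_mul 2
  have key1 := integral_Ioi_of_hasDerivAt_of_nonneg hHcont hHderiv hpos1 hHtend
  have hD1int := integrableOn_Ioi_deriv_of_nonneg hHcont hHderiv hpos1 hHtend
  have hval1 : (0:ℝ) - -(Real.exp (-(lam * 0)) * F 0) = 2 := by
    rw [hF0]; simp
  rw [hval1] at key1
  have hTint : IntegrableOn T (Ioi 0) := by
    have h0 : IntegrableOn (fun x : ℝ =>
        (T x + Real.exp (-(lam * x)) * g x) - Real.exp (-(lam * x)) * g x) (Ioi 0) :=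
      hD1int.sub hs'int
    exact h0.congr_fun (fun x hx => by ring) measurableSet_Ioi
  have hTval : ∫ x in Ioi (0:ℝ), T x = 1 := by
    rw [integral_add hTint hs'int] at key1
    linarith [hs'1]
  -- Part 2
  have hKderiv : ∀ ξ ∈ Ioi (0:ℝ),
      HasDerivAt (fun x => -((x + 1/lam) * Real.exp (-(lam * x)) * F x))
      (ξ * T ξ + (ξ + 1/lam) * (Real.exp (-(lam * ξ)) * g ξ)) ξ := by
    intro ξ hξ
    have hq : HasDerivAt (fun x : ℝ => x + 1/lam) 1 ξ := (hasDerivAt_id ξ).add_const _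
    have h2 := ((hq.fun_mul (he ξ)).fun_mul (hFd ξ hξ)).fun_neg
    refine h2.congr_deriv ?_
    rw [hT_def]; field_simp; ring
  have hpos2 : ∀ ξ ∈ Ioi (0:ℝ),
      0 ≤ ξ * T ξ + (ξ + 1/lam) * (Real.exp (-(lam * ξ)) * g ξ) := by
    intro ξ hξ
    have hξ0 : (0:ℝ) < ξ := hξ
    have h2 := hFnonneg ξ hξ0.le
    have h3 := hg_nonneg ξ hξ0.le
    have h4 := (Real.exp_pos (-(lam * ξ))).le
    rw [hT_def]
    have h5 : (0:ℝ) ≤ ξ + 1/lam := by positivity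
    exact add_nonneg (mul_nonneg hξ0.le (mul_nonneg (mul_nonneg hlam.le h4) h2))
      (mul_nonneg h5 (mul_nonneg h4 h3))
  have hKcont : ContinuousWithinAt
      (fun x => -((x + 1/lam) * Real.exp (-(lam * x)) * F x)) (Ici 0) 0 := by
    have hc : Continuous fun x : ℝ => (x + 1/lam) * Real.exp (-(lam * x)) :=
      (continuous_id.add continuous_const).mul
        (Real.continuous_exp.comp ((continuous_const.mul continuous_id).neg))
    exact (hc.continuousWithinAt.mul (F_contWithin g hgint)).neg
  have hKtend : Tendsto (fun x : ℝ => -((x + 1/lam) * Real.exp (-(lam * x)) * F x))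
      atTop (𝓝 0) := by
    apply squeeze_zero_norm' (a := fun x : ℝ =>
      2 * (x * Real.exp (-(lam * x))) + (2/lam) * Real.exp (-(lam * x)))
    · filter_upwards [eventually_ge_atTop (0:ℝ)] with x hx
      have h2 := hFnonneg x hx
      have h4 := (Real.exp_pos (-(lam * x))).le
      have h5 : (0:ℝ) ≤ x + 1/lam := by positivity
      have h6 : (0:ℝ) ≤ (x + 1/lam) * Real.exp (-(lam * x)) := mul_nonneg h5 h4
      rw [norm_neg, Real.norm_eq_abs, abs_of_nonneg (mul_nonneg h6 h2)]
      calc (x + 1/lam) * Real.exp (-(lam * x)) * F x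
          ≤ (x + 1/lam) * Real.exp (-(lam * x)) * 2 :=
            mul_le_mul_of_nonneg_left (hFle x hx) h6
        _ = 2 * (x * Real.exp (-(lam * x))) + (2/lam) * Real.exp (-(lam * x)) := by ring
    · simpa using (h1tend.const_mul 2).add (h0tend.const_mul (2/lam))
  have key2 := integral_Ioi_of_hasDerivAt_of_nonneg hKcont hKderiv hpos2 hKtend
  have hD2int := integrableOn_Ioi_deriv_of_nonneg hKcont hKderiv hpos2 hKtend
  have hval2 : (0:ℝ) - -((0 + 1/lam) * Real.exp (-(lam * 0)) * F 0) = 2/lam := by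
    rw [hF0]; simp; field_simp
  rw [hval2] at key2
  have hsec_int : IntegrableOn
      (fun ξ : ℝ => (ξ + 1/lam) * (Real.exp (-(lam * ξ)) * g ξ)) (Ioi 0) := by
    have h0 : IntegrableOn (fun ξ : ℝ => ξ * (Real.exp (-(lam * ξ)) * g ξ)
        + (1/lam) * (Real.exp (-(lam * ξ)) * g ξ)) (Ioi 0) :=
      hxs'int.add (hs'int.const_mul (1/lam))
    exact h0.congr_fun (fun x hx => by ring) measurableSet_Ioi
  have hsec_val : ∫ ξ in Ioi (0:ℝ), (ξ + 1/lam) * (Real.exp (-(lam * ξ)) * g ξ)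
      = 2/(3*lam) + (1/lam) := by
    have h0 : (fun ξ : ℝ => (ξ + 1/lam) * (Real.exp (-(lam * ξ)) * g ξ))
        = fun ξ : ℝ => ξ * (Real.exp (-(lam * ξ)) * g ξ)
          + (1/lam) * (Real.exp (-(lam * ξ)) * g ξ) := by funext ξ; ring
    rw [h0, integral_add hxs'int (hs'int.const_mul (1/lam)), hxs'val,
      integral_const_mul, hs'1, mul_one]
  have hxTint : IntegrableOn (fun ξ : ℝ => ξ * T ξ) (Ioi 0) := by
    have h0 : IntegrableOn (fun ξ : ℝ =>
        (ξ * T ξ + (ξ + 1/lam) * (Real.exp (-(lam * ξ)) * g ξ))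
          - (ξ + 1/lam) * (Real.exp (-(lam * ξ)) * g ξ)) (Ioi 0) :=
      hD2int.sub hsec_int
    exact h0.congr_fun (fun x hx => by ring) measurableSet_Ioi
  have hxTval : ∫ ξ in Ioi (0:ℝ), ξ * T ξ = 1/(3*lam) := by
    rw [integral_add hxTint hsec_int, hsec_val] at key2
    have h0 : ∫ ξ in Ioi (0:ℝ), ξ * T ξ = 2/lam - (2/(3*lam) + 1/lam) := by linarith
    rw [h0]; field_simp; ring
  constructor
  · rw [show (∫ ξ in Ioi (0:ℝ), τ ξ) = ∫ x in Ioi (0:ℝ), T x from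
      setIntegral_congr_fun measurableSet_Ioi (fun ξ hξ => by
        rw [hτ ξ hξ, hinner ξ hξ, hT_def, neg_mul])]
    exact hTval
  · rw [show (∫ ξ in Ioi (0:ℝ), ξ * τ ξ) = ∫ x in Ioi (0:ℝ), x * T x from
      setIntegral_congr_fun measurableSet_Ioi (fun ξ hξ => by
        rw [hτ ξ hξ, hinner ξ hξ, hT_def, neg_mul])]
    exact hxTval
end

section
/- Let δ₁, δ₂, δ₃ be real numbers such that λ₁ := 2(3δ₃ − 2δ₁ − δ₂) > 0 and λ₂ := 2(2δ₃ − δ₁ − δ₂) > 0. Then for every twice continuously differentiable function f : ℝ² → ℝ such that f and all of its first- and second-order partial derivatives are bounded, the following identity holds: ∫₀^∞∫₀^∞ [∂²f/∂g² + ∂²f/∂h² − 2∂²f/∂g∂h + 2(δ₁−δ₂)∂f/∂g + 2(δ₂−δ₃)∂f/∂h](g,h) · 4λ₁λ₂ e^{−2λ₁g − 2λ₂h} dg dh + ∫₀^∞ [∂f/∂g − (1/2)∂f/∂h](0,h) · 4λ₁λ₂ e^{−2λ₂h} dh + ∫₀^∞ [∂f/∂h − (3/2)∂f/∂g](g,0)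 · 4λ₁λ₂ e^{−2λ₁g} dg = 0. -/
open MeasureTheory
open Set Filter Topology

lemma aux_integrableOn_s11 {c C : ℝ} (hc : 0 < c) {φ : ℝ → ℝ}
    (hφ : Continuous φ) (hb : ∀ x, |φ x| ≤ C) :
    IntegrableOn (fun x => φ x * Real.exp (-c * x)) (Set.Ioi 0) := by
  have h1 : IntegrableOn (fun x => Real.exp (-c * x)) (Set.Ioi (0:ℝ)) :=
    exp_neg_integrableOn_Ioi 0 hc
  refine (h1.const_mul C).mono'
    ((hφ.mul (Real.continuous_exp.comp (by continuity))).aestronglyMeasurable) ?_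
  filter_upwards with x
  rw [norm_mul, Real.norm_eq_abs, Real.norm_eq_abs, Real.abs_exp]
  exact mul_le_mul_of_nonneg_right (hb x) (Real.exp_pos _).le

lemma aux_ibp {c C : ℝ} (hc : 0 < c) {φ ψ : ℝ → ℝ}
    (hd : ∀ x, HasDerivAt φ (ψ x) x) (hψ : Continuous ψ)
    (hbφ : ∀ x, |φ x| ≤ C) (hbψ : ∀ x, |ψ x| ≤ C) :
    ∫ x in Set.Ioi (0:ℝ), ψ x * Real.exp (-c * x)
      = c * (∫ x in Set.Ioi (0:ℝ), φ x * Real.exp (-c * x)) - φ 0 := by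
  have hφc : Continuous φ := by
    rw [continuous_iff_continuousAt]; exact fun x => (hd x).continuousAt
  have he : ∀ x : ℝ, HasDerivAt (fun y => Real.exp (-c * y)) (Real.exp (-c * x) * (-c)) x := by
    intro x
    simpa using (((hasDerivAt_id x).const_mul (-c)).exp)
  have hF : ∀ x : ℝ, HasDerivAt (fun y => φ y * Real.exp (-c * y))
      ((ψ x - c * φ x) * Real.exp (-c * x)) x := by
    intro x
    have : HasDerivAt (fun y => φ y * Real.exp (-c * y)) _ x := (hd x).mul (he x)
    convert this using 1
    ring
  have htend : Tendsto (fun x => φ x * Real.exp (-c * x)) atTop (𝓝 0) := by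
    have h0 : Tendsto (fun x : ℝ => Real.exp (-c * x)) atTop (𝓝 0) := by
      have : Tendsto (fun x : ℝ => -c * x) atTop atBot := by
        apply Filter.Tendsto.const_mul_atTop_of_neg (by linarith) tendsto_id
      exact Real.tendsto_exp_atBot.comp this
    have hC : Tendsto (fun x : ℝ => C * Real.exp (-c * x)) atTop (𝓝 0) := by
      simpa using h0.const_mul C
    apply squeeze_zero_norm _ hC
    intro x
    rw [norm_mul, Real.norm_eq_abs, Real.norm_eq_abs, Real.abs_exp]
    exact mul_le_mul_of_nonneg_right (hbφ x) (Real.exp_pos _).le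
  have hint : IntegrableOn (fun x => (ψ x - c * φ x) * Real.exp (-c * x)) (Set.Ioi (0:ℝ)) := by
    refine aux_integrableOn_s11 (C := C + c * C) hc (by continuity) ?_
    intro x
    calc |ψ x - c * φ x| ≤ |ψ x| + |c * φ x| := abs_sub _ _
      _ ≤ C + c * C := by
          have := abs_mul c (φ x)
          have h2 : |c * φ x| ≤ c * C := by
            rw [abs_mul, abs_of_pos hc]
            exact mul_le_mul_of_nonneg_left (hbφ x) hc.le
          exact add_le_add (hbψ x) h2
  have key := integral_Ioi_of_hasDerivAt_of_tendsto
    ((hF 0).continuousAt.continuousWithinAt) (fun x _ => hF x) hint htend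
  simp only [mul_zero, Real.exp_zero, mul_one, zero_sub] at key
  have hsplit : ∫ x in Set.Ioi (0:ℝ), (ψ x - c * φ x) * Real.exp (-c * x)
      = (∫ x in Set.Ioi (0:ℝ), ψ x * Real.exp (-c * x))
        - c * ∫ x in Set.Ioi (0:ℝ), φ x * Real.exp (-c * x) := by
    have h1 := aux_integrableOn_s11 hc hψ hbψ
    have h2 := (aux_integrableOn_s11 hc hφc hbφ).const_mul c
    rw [show (fun x => (ψ x - c * φ x) * Real.exp (-c * x))
        = fun x => ψ x * Real.exp (-c * x) - c * (φ x * Real.exp (-c * x)) by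
      funext x; ring]
    rw [integral_sub h1 h2, integral_const_mul]
  rw [hsplit] at key
  linarith


lemma aux_prod_integrable {c₁ c₂ C : ℝ} (h1 : 0 < c₁) (h2 : 0 < c₂) {u : ℝ × ℝ → ℝ}
    (hu : Continuous u) (hb : ∀ p, |u p| ≤ C) :
    Integrable (fun p : ℝ × ℝ => u (p.2, p.1) * Real.exp (-c₁ * p.2) * Real.exp (-c₂ * p.1))
      ((volume.restrict (Set.Ioi 0)).prod (volume.restrict (Set.Ioi 0))) := by
  have e1 : Integrable (fun x => Real.exp (-c₁ * x)) (volume.restrict (Set.Ioi (0:ℝ))) :=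
    exp_neg_integrableOn_Ioi 0 h1
  have e2 : Integrable (fun x => C * Real.exp (-c₂ * x)) (volume.restrict (Set.Ioi (0:ℝ))) :=
    (exp_neg_integrableOn_Ioi 0 h2).const_mul C
  have hdom := e2.mul_prod e1
  refine Integrable.mono' hdom ?_ ?_
  · apply Continuous.aestronglyMeasurable
    have hc1 : Continuous (fun p : ℝ × ℝ => u (p.2, p.1)) :=
      hu.comp (continuous_snd.prodMk continuous_fst)
    have hc2 : Continuous (fun p : ℝ × ℝ => Real.exp (-c₁ * p.2)) := by continuity
    have hc3 : Continuous (fun p : ℝ × ℝ => Real.exp (-c₂ * p.1)) := by continuity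
    exact (hc1.mul hc2).mul hc3
  · filter_upwards with p
    rw [norm_mul, norm_mul, Real.norm_eq_abs, Real.norm_eq_abs, Real.norm_eq_abs,
      Real.abs_exp, Real.abs_exp]
    have hb' := hb (p.2, p.1)
    calc |u (p.2, p.1)| * Real.exp (-c₁ * p.2) * Real.exp (-c₂ * p.1)
        ≤ C * Real.exp (-c₁ * p.2) * Real.exp (-c₂ * p.1) := by
          have e1p := (Real.exp_pos (-c₁ * p.2)).le
          have e2p := (Real.exp_pos (-c₂ * p.1)).le
          apply mul_le_mul_of_nonneg_right _ e2p
          exact mul_le_mul_of_nonneg_right hb' e1p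
      _ = C * Real.exp (-c₂ * p.1) * Real.exp (-c₁ * p.2) := by ring

lemma aux_swap {c₁ c₂ C : ℝ} (h1 : 0 < c₁) (h2 : 0 < c₂) {u : ℝ × ℝ → ℝ}
    (hu : Continuous u) (hb : ∀ p, |u p| ≤ C) :
    ∫ h in Set.Ioi (0:ℝ), (∫ g in Set.Ioi (0:ℝ), u (g, h) * Real.exp (-c₁ * g)) * Real.exp (-c₂ * h)
      = ∫ g in Set.Ioi (0:ℝ), (∫ h in Set.Ioi (0:ℝ), u (g, h) * Real.exp (-c₂ * h)) * Real.exp (-c₁ * g) := by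
  have key := MeasureTheory.integral_integral_swap
    (f := fun h g => u (g, h) * Real.exp (-c₁ * g) * Real.exp (-c₂ * h))
    (μ := volume.restrict (Set.Ioi (0:ℝ))) (ν := volume.restrict (Set.Ioi (0:ℝ)))
    (aux_prod_integrable h1 h2 hu hb)
  simp only [← MeasureTheory.integral_mul_const]
  rw [show (fun (h : ℝ) => ∫ g in Set.Ioi (0:ℝ), u (g, h) * Real.exp (-c₁ * g) * Real.exp (-c₂ * h))
      = fun h => ∫ g in Set.Ioi (0:ℝ), u (g, h) * Real.exp (-c₁ * g) * Real.exp (-c₂ * h) from rfl]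
  rw [key]
  congr 1
  funext g
  congr 1
  funext h
  ring

lemma aux_marginal {c₁ c₂ C : ℝ} (h1 : 0 < c₁) (h2 : 0 < c₂) {u : ℝ × ℝ → ℝ}
    (hu : Continuous u) (hb : ∀ p, |u p| ≤ C) :
    Integrable (fun h => (∫ g in Set.Ioi (0:ℝ), u (g, h) * Real.exp (-c₁ * g)) * Real.exp (-c₂ * h))
      (volume.restrict (Set.Ioi 0)) := by
  have key := (aux_prod_integrable h1 h2 hu hb).integral_prod_left
  have : (fun h => ∫ g in Set.Ioi (0:ℝ),
      u (g, h) * Real.exp (-c₁ * g) * Real.exp (-c₂ * h))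
      = fun h => (∫ g in Set.Ioi (0:ℝ), u (g, h) * Real.exp (-c₁ * g)) * Real.exp (-c₂ * h) := by
    funext h
    rw [MeasureTheory.integral_mul_const]
  rw [← this]
  exact key

lemma aux_outer {c₁ c₂ C : ℝ} (h1 : 0 < c₁) (h2 : 0 < c₂)
    {u v : ℝ × ℝ → ℝ} (hu : Continuous u) (hv : Continuous v)
    (hbu : ∀ p, |u p| ≤ C) (hbv : ∀ p, |v p| ≤ C)
    (hd : ∀ p : ℝ × ℝ, HasDerivAt (fun x => u (x, p.2)) (v p) p.1) :
    ∫ h in Set.Ioi (0:ℝ), (∫ g in Set.Ioi (0:ℝ), v (g, h) * Real.exp (-c₁ * g)) * Real.exp (-c₂ * h)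
      = c₁ * (∫ h in Set.Ioi (0:ℝ),
            (∫ g in Set.Ioi (0:ℝ), u (g, h) * Real.exp (-c₁ * g)) * Real.exp (-c₂ * h))
        - ∫ h in Set.Ioi (0:ℝ), u (0, h) * Real.exp (-c₂ * h) := by
  have hinner : ∀ hh : ℝ, (∫ g in Set.Ioi (0:ℝ), v (g, hh) * Real.exp (-c₁ * g))
      = c₁ * (∫ g in Set.Ioi (0:ℝ), u (g, hh) * Real.exp (-c₁ * g)) - u (0, hh) := by
    intro hh
    refine aux_ibp (C := C) h1 (fun x => hd (x, hh)) ?_ ?_ ?_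
    · exact hv.comp (continuous_id.prodMk continuous_const)
    · exact fun x => hbu (x, hh)
    · exact fun x => hbv (x, hh)
  calc ∫ h in Set.Ioi (0:ℝ), (∫ g in Set.Ioi (0:ℝ), v (g, h) * Real.exp (-c₁ * g)) * Real.exp (-c₂ * h)
      = ∫ h in Set.Ioi (0:ℝ),
          (c₁ * ((∫ g in Set.Ioi (0:ℝ), u (g, h) * Real.exp (-c₁ * g)) * Real.exp (-c₂ * h))
            - u (0, h) * Real.exp (-c₂ * h)) := by
        congr 1
        funext h
        rw [hinner h]
        ring
    _ = c₁ * (∫ h in Set.Ioi (0:ℝ),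
            (∫ g in Set.Ioi (0:ℝ), u (g, h) * Real.exp (-c₁ * g)) * Real.exp (-c₂ * h))
        - ∫ h in Set.Ioi (0:ℝ), u (0, h) * Real.exp (-c₂ * h) := by
        rw [integral_sub ((aux_marginal h1 h2 hu hbu).const_mul c₁)
          (aux_integrableOn_s11 h2 (show Continuous fun x : ℝ => u (0, x) from hu.comp (continuous_const.prodMk continuous_id)) (fun x => hbu (0, x)))]
        rw [integral_const_mul]

lemma aux_abs5 (a b c d e : ℝ) : |a + b - c + d + e| ≤ |a| + |b| + |c| + |d| + |e| := by
  have h1 : |a + b| ≤ |a| + |b| := abs_add_le a b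
  have h2 : |a + b - c| ≤ |a + b| + |c| := abs_sub _ _
  have h3 : |a + b - c + d| ≤ |a + b - c| + |d| := abs_add_le _ _
  have h4 : |a + b - c + d + e| ≤ |a + b - c + d| + |e| := abs_add_le _ _
  linarith


/-- First partial derivative in the first variable. -/
noncomputable def Dg (f : ℝ × ℝ → ℝ) (p : ℝ × ℝ) : ℝ :=
  deriv (fun x => f (x, p.2)) p.1

/-- First partial derivative in the second variable. -/
noncomputable def Dh (f : ℝ × ℝ → ℝ) (p : ℝ × ℝ) : ℝ :=
  deriv (fun y => f (p.1, y)) p.2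

/-- Second partial derivative in the first variable. -/
noncomputable def Dgg (f : ℝ × ℝ → ℝ) (p : ℝ × ℝ) : ℝ := Dg (Dg f) p

/-- Mixed second partial derivative. -/
noncomputable def Dgh (f : ℝ × ℝ → ℝ) (p : ℝ × ℝ) : ℝ := Dg (Dh f) p

/-- Second partial derivative in the second variable. -/
noncomputable def Dhh (f : ℝ × ℝ → ℝ) (p : ℝ × ℝ) : ℝ := Dh (Dh f) p

/-- Basic Adjoint Relation for the skew-elastic system (Appendix): the product of
exponentials `π(dg,dh) = 4λ₁λ₂ e^{−2λ₁g−2λ₂h} dg dh`, together with the boundary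
measures `ν₁(dh) = 4λ₁λ₂ e^{−2λ₂h} dh` on `{g = 0}` and `ν₂(dg) = 4λ₁λ₂ e^{−2λ₁g} dg`
on `{h = 0}`, satisfies the BAR for every bounded `C²` test function `f` with bounded
first- and second-order derivatives. -/
theorem basic_adjoint_relation_skew_elastic
    (δ₁ δ₂ δ₃ l₁ l₂ : ℝ)
    (hl₁ : l₁ = 2 * (3 * δ₃ - 2 * δ₁ - δ₂)) (hl₂ : l₂ = 2 * (2 * δ₃ - δ₁ - δ₂))
    (hl₁pos : 0 < l₁) (hl₂pos : 0 < l₂)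
    (f : ℝ × ℝ → ℝ) (hf : ContDiff ℝ 2 f)
    (hbdd : ∃ C : ℝ, ∀ p : ℝ × ℝ,
      |f p| ≤ C ∧ ‖fderiv ℝ f p‖ ≤ C ∧ ‖fderiv ℝ (fderiv ℝ f) p‖ ≤ C) :
    (∫ h in Set.Ioi (0 : ℝ), ∫ g in Set.Ioi (0 : ℝ),
        (Dgg f (g, h) + Dhh f (g, h) - 2 * Dgh f (g, h)
            + 2 * (δ₁ - δ₂) * Dg f (g, h) + 2 * (δ₂ - δ₃) * Dh f (g, h))
          * (4 * l₁ * l₂ * Real.exp (-2 * l₁ * g - 2 * l₂ * h)))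
      + (∫ h in Set.Ioi (0 : ℝ),
          (Dg f (0, h) - 1 / 2 * Dh f (0, h)) * (4 * l₁ * l₂ * Real.exp (-2 * l₂ * h)))
      + (∫ g in Set.Ioi (0 : ℝ),
          (Dh f (g, 0) - 3 / 2 * Dg f (g, 0)) * (4 * l₁ * l₂ * Real.exp (-2 * l₁ * g)))
      = 0 := by
  obtain ⟨C, hC⟩ := hbdd
  have h2l1 : (0:ℝ) < 2 * l₁ := by linarith
  have h2l2 : (0:ℝ) < 2 * l₂ := by linarith
  -- basic differentiability
  have hf1 : Differentiable ℝ f := hf.differentiable (by norm_num)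
  have hf'cd : ContDiff ℝ 1 (fderiv ℝ f) := hf.fderiv_right (by norm_num)
  have hf'diff : Differentiable ℝ (fderiv ℝ f) := hf'cd.differentiable one_ne_zero
  have hf'cont : Continuous (fderiv ℝ f) := hf'cd.continuous
  have hf''cont : Continuous (fderiv ℝ (fderiv ℝ f)) := hf'cd.continuous_fderiv one_ne_zero
  set pg : ℝ × ℝ → ℝ := fun p => fderiv ℝ f p (1, 0) with hpg_def
  set ph : ℝ × ℝ → ℝ := fun p => fderiv ℝ f p (0, 1) with hph_def
  set qgg : ℝ × ℝ → ℝ := fun p => fderiv ℝ (fderiv ℝ f) p (1, 0) (1, 0) with hqgg_def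
  set qgh : ℝ × ℝ → ℝ := fun p => fderiv ℝ (fderiv ℝ f) p (1, 0) (0, 1) with hqgh_def
  set qhh : ℝ × ℝ → ℝ := fun p => fderiv ℝ (fderiv ℝ f) p (0, 1) (0, 1) with hqhh_def
  have hcg : ∀ p : ℝ × ℝ, HasDerivAt (fun x : ℝ => (x, p.2)) ((1:ℝ), (0:ℝ)) p.1 :=
    fun p => (hasDerivAt_id p.1).prodMk (hasDerivAt_const p.1 p.2)
  have hch : ∀ p : ℝ × ℝ, HasDerivAt (fun y : ℝ => (p.1, y)) ((0:ℝ), (1:ℝ)) p.2 :=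
    fun p => (hasDerivAt_const p.2 p.1).prodMk (hasDerivAt_id p.2)
  have hDg : ∀ p : ℝ × ℝ, HasDerivAt (fun x => f (x, p.2)) (pg p) p.1 := by
    intro p
    exact (hf1 p).hasFDerivAt.comp_hasDerivAt p.1 (hcg p)
  have hDh : ∀ p : ℝ × ℝ, HasDerivAt (fun y => f (p.1, y)) (ph p) p.2 := by
    intro p
    exact (hf1 p).hasFDerivAt.comp_hasDerivAt p.2 (hch p)
  have hfd' : ∀ (p : ℝ × ℝ) (v : ℝ × ℝ),
      HasFDerivAt (fun q => fderiv ℝ f q v)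
        ((fderiv ℝ (fderiv ℝ f) p).flip v) p := by
    intro p v
    exact (ContinuousLinearMap.apply ℝ ℝ v).hasFDerivAt.comp p (hf'diff p).hasFDerivAt
  have hDgPg : ∀ p : ℝ × ℝ, HasDerivAt (fun x => pg (x, p.2)) (qgg p) p.1 := by
    intro p; exact (hfd' p (1, 0)).comp_hasDerivAt p.1 (hcg p)
  have hDgPh : ∀ p : ℝ × ℝ, HasDerivAt (fun x => ph (x, p.2)) (qgh p) p.1 := by
    intro p; exact (hfd' p (0, 1)).comp_hasDerivAt p.1 (hcg p)
  have hDhPh : ∀ p : ℝ × ℝ, HasDerivAt (fun y => ph (p.1, y)) (qhh p) p.2 := by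
    intro p; exact (hfd' p (0, 1)).comp_hasDerivAt p.2 (hch p)
  -- identification of the named partial derivatives
  have hDgf : ∀ p : ℝ × ℝ, Dg f p = pg p := fun p => (hDg p).deriv
  have hDhf : ∀ p : ℝ × ℝ, Dh f p = ph p := fun p => (hDh p).deriv
  have hfunDg : Dg f = pg := funext hDgf
  have hfunDh : Dh f = ph := funext hDhf
  have hDggf : ∀ p : ℝ × ℝ, Dgg f p = qgg p := by
    intro p
    show Dg (Dg f) p = qgg p
    rw [hfunDg]
    exact (hDgPg p).deriv
  have hDghf : ∀ p : ℝ × ℝ, Dgh f p = qgh p := by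
    intro p
    show Dg (Dh f) p = qgh p
    rw [hfunDh]
    exact (hDgPh p).deriv
  have hDhhf : ∀ p : ℝ × ℝ, Dhh f p = qhh p := by
    intro p
    show Dh (Dh f) p = qhh p
    rw [hfunDh]
    exact (hDhPh p).deriv
  -- bounds
  have hnorm1 : ‖((1:ℝ), (0:ℝ))‖ = 1 := by simp [Prod.norm_def]
  have hnorm2 : ‖((0:ℝ), (1:ℝ))‖ = 1 := by simp [Prod.norm_def]
  have hbf : ∀ p : ℝ × ℝ, |f p| ≤ C := fun p => (hC p).1
  have hbpg : ∀ p, |pg p| ≤ C := by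
    intro p
    have := (fderiv ℝ f p).le_opNorm ((1:ℝ), (0:ℝ))
    rw [hnorm1, mul_one] at this
    exact le_trans this (hC p).2.1
  have hbph : ∀ p, |ph p| ≤ C := by
    intro p
    have := (fderiv ℝ f p).le_opNorm ((0:ℝ), (1:ℝ))
    rw [hnorm2, mul_one] at this
    exact le_trans this (hC p).2.1
  have hbq : ∀ (p : ℝ × ℝ) (v w : ℝ × ℝ), ‖v‖ = 1 → ‖w‖ = 1 →
      |fderiv ℝ (fderiv ℝ f) p v w| ≤ C := by
    intro p v w hv hw
    have h1 := (fderiv ℝ (fderiv ℝ f) p v).le_opNorm w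
    rw [hw, mul_one] at h1
    have h2 := (fderiv ℝ (fderiv ℝ f) p).le_opNorm v
    rw [hv, mul_one] at h2
    exact le_trans h1 (le_trans h2 (hC p).2.2)
  have hbqgg : ∀ p, |qgg p| ≤ C := fun p => hbq p _ _ hnorm1 hnorm1
  have hbqgh : ∀ p, |qgh p| ≤ C := fun p => hbq p _ _ hnorm1 hnorm2
  have hbqhh : ∀ p, |qhh p| ≤ C := fun p => hbq p _ _ hnorm2 hnorm2
  -- continuity
  have hcf : Continuous f := hf.continuous
  have hcpg : Continuous pg :=
    (ContinuousLinearMap.apply ℝ ℝ ((1:ℝ), (0:ℝ))).continuous.comp hf'cont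
  have hcph : Continuous ph :=
    (ContinuousLinearMap.apply ℝ ℝ ((0:ℝ), (1:ℝ))).continuous.comp hf'cont
  have hcq : ∀ v w : ℝ × ℝ, Continuous (fun p => fderiv ℝ (fderiv ℝ f) p v w) := by
    intro v w
    exact (ContinuousLinearMap.apply ℝ ℝ w).continuous.comp
      ((ContinuousLinearMap.apply ℝ (ℝ × ℝ →L[ℝ] ℝ) v).continuous.comp hf''cont)
  have hcqgg : Continuous qgg := hcq _ _
  have hcqgh : Continuous qgh := hcq _ _
  have hcqhh : Continuous qhh := hcq _ _
  -- the combined integrand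
  set B : ℝ × ℝ → ℝ := fun p => qgg p + qhh p - 2 * qgh p
      + 2 * (δ₁ - δ₂) * pg p + 2 * (δ₂ - δ₃) * ph p with hB_def
  have hB' : ∀ x y : ℝ, qgg (x, y) + qhh (x, y) - 2 * qgh (x, y)
      + 2 * (δ₁ - δ₂) * pg (x, y) + 2 * (δ₂ - δ₃) * ph (x, y) = B (x, y) := by
    intro x y; rw [hB_def]
  have hcB : Continuous B := by
    rw [hB_def]
    exact ((((hcqgg.add hcqhh).sub (continuous_const.mul hcqgh)).add
      (continuous_const.mul hcpg)).add (continuous_const.mul hcph))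
  have hbB : ∀ p, |B p| ≤ C + C + 2 * C + |2 * (δ₁ - δ₂)| * C + |2 * (δ₂ - δ₃)| * C := by
    intro p
    have h1 : |2 * qgh p| ≤ 2 * C := by
      rw [abs_mul]
      simpa using mul_le_mul_of_nonneg_left (hbqgh p) (by norm_num : (0:ℝ) ≤ |(2:ℝ)|)
    have h2 : |2 * (δ₁ - δ₂) * pg p| ≤ |2 * (δ₁ - δ₂)| * C := by
      rw [abs_mul]
      exact mul_le_mul_of_nonneg_left (hbpg p) (abs_nonneg _)
    have h3 : |2 * (δ₂ - δ₃) * ph p| ≤ |2 * (δ₂ - δ₃)| * C := by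
      rw [abs_mul]
      exact mul_le_mul_of_nonneg_left (hbph p) (abs_nonneg _)
    have h4 := aux_abs5 (qgg p) (qhh p) (2 * qgh p) (2 * (δ₁ - δ₂) * pg p) (2 * (δ₂ - δ₃) * ph p)
    have h5 : B p = qgg p + qhh p - 2 * qgh p + 2 * (δ₁ - δ₂) * pg p + 2 * (δ₂ - δ₃) * ph p := by
      rw [hB_def]
    rw [h5]
    have := hbqgg p
    have := hbqhh p
    linarith
  -- rewrite the partial derivatives and the exponentials in the goal
  simp only [hDggf, hDhhf, hDghf, hDgf, hDhf, hB']
  simp only [show ∀ g h : ℝ, (-2 * l₁ * g - 2 * l₂ * h) = (-(2 * l₁) * g) + (-(2 * l₂) * h) from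
      fun g h => by ring, Real.exp_add]
  simp only [show ∀ x : ℝ, (-2 * l₂ * x) = (-(2 * l₂) * x) from fun x => by ring,
    show ∀ x : ℝ, (-2 * l₁ * x) = (-(2 * l₁) * x) from fun x => by ring]
  -- factor out the constant 4 l₁ l₂
  rw [show (fun h => ∫ g in Set.Ioi (0:ℝ),
        B (g, h) * (4 * l₁ * l₂ * (Real.exp (-(2 * l₁) * g) * Real.exp (-(2 * l₂) * h))))
      = fun h => (4 * l₁ * l₂) *
          ((∫ g in Set.Ioi (0:ℝ), B (g, h) * Real.exp (-(2 * l₁) * g)) * Real.exp (-(2 * l₂) * h))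
      from funext fun h => by
        rw [show (fun g => B (g, h) * (4 * l₁ * l₂ * (Real.exp (-(2 * l₁) * g) * Real.exp (-(2 * l₂) * h))))
            = fun g => (4 * l₁ * l₂ * Real.exp (-(2 * l₂) * h)) * (B (g, h) * Real.exp (-(2 * l₁) * g))
            from funext fun g => by ring, MeasureTheory.integral_const_mul]
        ring]
  rw [show (fun h => (pg (0, h) - 1 / 2 * ph (0, h)) * (4 * l₁ * l₂ * Real.exp (-(2 * l₂) * h)))
      = fun h => (4 * l₁ * l₂) * ((pg (0, h) - 1 / 2 * ph (0, h)) * Real.exp (-(2 * l₂) * h))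
      from funext fun h => by ring]
  rw [show (fun g => (ph (g, 0) - 3 / 2 * pg (g, 0)) * (4 * l₁ * l₂ * Real.exp (-(2 * l₁) * g)))
      = fun g => (4 * l₁ * l₂) * ((ph (g, 0) - 3 / 2 * pg (g, 0)) * Real.exp (-(2 * l₁) * g))
      from funext fun g => by ring]
  rw [MeasureTheory.integral_const_mul, MeasureTheory.integral_const_mul,
    MeasureTheory.integral_const_mul]
  -- integrability instances (inner, in g)
  have iqgg : ∀ hh : ℝ, IntegrableOn (fun g => qgg (g, hh) * Real.exp (-(2 * l₁) * g)) (Set.Ioi 0) :=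
    fun hh => aux_integrableOn_s11 h2l1 (hcqgg.comp (continuous_id.prodMk continuous_const))
      (fun x => hbqgg (x, hh))
  have iqhh : ∀ hh : ℝ, IntegrableOn (fun g => qhh (g, hh) * Real.exp (-(2 * l₁) * g)) (Set.Ioi 0) :=
    fun hh => aux_integrableOn_s11 h2l1 (hcqhh.comp (continuous_id.prodMk continuous_const))
      (fun x => hbqhh (x, hh))
  have iqgh : ∀ hh : ℝ, IntegrableOn (fun g => qgh (g, hh) * Real.exp (-(2 * l₁) * g)) (Set.Ioi 0) :=
    fun hh => aux_integrableOn_s11 h2l1 (hcqgh.comp (continuous_id.prodMk continuous_const))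
      (fun x => hbqgh (x, hh))
  have ipg : ∀ hh : ℝ, IntegrableOn (fun g => pg (g, hh) * Real.exp (-(2 * l₁) * g)) (Set.Ioi 0) :=
    fun hh => aux_integrableOn_s11 h2l1 (hcpg.comp (continuous_id.prodMk continuous_const))
      (fun x => hbpg (x, hh))
  have iph : ∀ hh : ℝ, IntegrableOn (fun g => ph (g, hh) * Real.exp (-(2 * l₁) * g)) (Set.Ioi 0) :=
    fun hh => aux_integrableOn_s11 h2l1 (hcph.comp (continuous_id.prodMk continuous_const))
      (fun x => hbph (x, hh))
  -- boundary integrability (1D)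
  have ig1 : IntegrableOn (fun h => pg (0, h) * Real.exp (-(2 * l₂) * h)) (Set.Ioi 0) :=
    aux_integrableOn_s11 h2l2 (hcpg.comp (continuous_const.prodMk continuous_id)) (fun x => hbpg (0, x))
  have ig2 : IntegrableOn (fun h => ph (0, h) * Real.exp (-(2 * l₂) * h)) (Set.Ioi 0) :=
    aux_integrableOn_s11 h2l2 (hcph.comp (continuous_const.prodMk continuous_id)) (fun x => hbph (0, x))
  have ig3 : IntegrableOn (fun g => pg (g, 0) * Real.exp (-(2 * l₁) * g)) (Set.Ioi 0) :=
    aux_integrableOn_s11 h2l1 (hcpg.comp (continuous_id.prodMk continuous_const)) (fun x => hbpg (x, 0))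
  have ig4 : IntegrableOn (fun g => ph (g, 0) * Real.exp (-(2 * l₁) * g)) (Set.Ioi 0) :=
    aux_integrableOn_s11 h2l1 (hcph.comp (continuous_id.prodMk continuous_const)) (fun x => hbph (x, 0))
  -- marginal integrability (outer, in h)
  have mqgg := aux_marginal (u := qgg) h2l1 h2l2 hcqgg hbqgg
  have mqhh := aux_marginal (u := qhh) h2l1 h2l2 hcqhh hbqhh
  have mqgh := aux_marginal (u := qgh) h2l1 h2l2 hcqgh hbqgh
  have mpg := aux_marginal (u := pg) h2l1 h2l2 hcpg hbpg
  have mph := aux_marginal (u := ph) h2l1 h2l2 hcph hbph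
  -- inner split of the main integrand
  have hin : ∀ hh : ℝ, (∫ g in Set.Ioi (0:ℝ), B (g, hh) * Real.exp (-(2 * l₁) * g))
      = (∫ g in Set.Ioi (0:ℝ), qgg (g, hh) * Real.exp (-(2 * l₁) * g))
        + (∫ g in Set.Ioi (0:ℝ), qhh (g, hh) * Real.exp (-(2 * l₁) * g))
        + (-2) * (∫ g in Set.Ioi (0:ℝ), qgh (g, hh) * Real.exp (-(2 * l₁) * g))
        + (2 * (δ₁ - δ₂)) * (∫ g in Set.Ioi (0:ℝ), pg (g, hh) * Real.exp (-(2 * l₁) * g))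
        + (2 * (δ₂ - δ₃)) * (∫ g in Set.Ioi (0:ℝ), ph (g, hh) * Real.exp (-(2 * l₁) * g)) := by
    intro hh
    rw [show (fun g => B (g, hh) * Real.exp (-(2 * l₁) * g))
        = fun g => qgg (g, hh) * Real.exp (-(2 * l₁) * g)
          + qhh (g, hh) * Real.exp (-(2 * l₁) * g)
          + (-2) * (qgh (g, hh) * Real.exp (-(2 * l₁) * g))
          + (2 * (δ₁ - δ₂)) * (pg (g, hh) * Real.exp (-(2 * l₁) * g))
          + (2 * (δ₂ - δ₃)) * (ph (g, hh) * Real.exp (-(2 * l₁) * g)) from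
      funext fun g => by rw [← hB' g hh]; ring]
    have j2 : IntegrableOn (fun g => qgg (g, hh) * Real.exp (-(2 * l₁) * g)
        + qhh (g, hh) * Real.exp (-(2 * l₁) * g)) (Set.Ioi 0) := (iqgg hh).add (iqhh hh)
    have j3 : IntegrableOn (fun g => qgg (g, hh) * Real.exp (-(2 * l₁) * g)
        + qhh (g, hh) * Real.exp (-(2 * l₁) * g)
        + (-2) * (qgh (g, hh) * Real.exp (-(2 * l₁) * g))) (Set.Ioi 0) :=
      j2.add ((iqgh hh).const_mul (-2))
    have j4 : IntegrableOn (fun g => qgg (g, hh) * Real.exp (-(2 * l₁) * g)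
        + qhh (g, hh) * Real.exp (-(2 * l₁) * g)
        + (-2) * (qgh (g, hh) * Real.exp (-(2 * l₁) * g))
        + (2 * (δ₁ - δ₂)) * (pg (g, hh) * Real.exp (-(2 * l₁) * g))) (Set.Ioi 0) :=
      j3.add ((ipg hh).const_mul (2 * (δ₁ - δ₂)))
    rw [MeasureTheory.integral_add j4 ((iph hh).const_mul (2 * (δ₂ - δ₃))),
      MeasureTheory.integral_add j3 ((ipg hh).const_mul (2 * (δ₁ - δ₂))),
      MeasureTheory.integral_add j2 ((iqgh hh).const_mul (-2)),
      MeasureTheory.integral_add (iqgg hh) (iqhh hh),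
      MeasureTheory.integral_const_mul, MeasureTheory.integral_const_mul,
      MeasureTheory.integral_const_mul]
  -- outer split of the main double integral
  have hT1 : (∫ h in Set.Ioi (0:ℝ),
        (∫ g in Set.Ioi (0:ℝ), B (g, h) * Real.exp (-(2 * l₁) * g)) * Real.exp (-(2 * l₂) * h))
      = (∫ h in Set.Ioi (0:ℝ),
          (∫ g in Set.Ioi (0:ℝ), qgg (g, h) * Real.exp (-(2 * l₁) * g)) * Real.exp (-(2 * l₂) * h))
        + (∫ h in Set.Ioi (0:ℝ),
          (∫ g in Set.Ioi (0:ℝ), qhh (g, h) * Real.exp (-(2 * l₁) * g)) * Real.exp (-(2 * l₂) * h))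
        + (-2) * (∫ h in Set.Ioi (0:ℝ),
          (∫ g in Set.Ioi (0:ℝ), qgh (g, h) * Real.exp (-(2 * l₁) * g)) * Real.exp (-(2 * l₂) * h))
        + (2 * (δ₁ - δ₂)) * (∫ h in Set.Ioi (0:ℝ),
          (∫ g in Set.Ioi (0:ℝ), pg (g, h) * Real.exp (-(2 * l₁) * g)) * Real.exp (-(2 * l₂) * h))
        + (2 * (δ₂ - δ₃)) * (∫ h in Set.Ioi (0:ℝ),
          (∫ g in Set.Ioi (0:ℝ), ph (g, h) * Real.exp (-(2 * l₁) * g)) * Real.exp (-(2 * l₂) * h)) := by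
    rw [show (fun h => (∫ g in Set.Ioi (0:ℝ), B (g, h) * Real.exp (-(2 * l₁) * g))
          * Real.exp (-(2 * l₂) * h))
        = fun h =>
          (∫ g in Set.Ioi (0:ℝ), qgg (g, h) * Real.exp (-(2 * l₁) * g)) * Real.exp (-(2 * l₂) * h)
          + (∫ g in Set.Ioi (0:ℝ), qhh (g, h) * Real.exp (-(2 * l₁) * g)) * Real.exp (-(2 * l₂) * h)
          + (-2) * ((∫ g in Set.Ioi (0:ℝ), qgh (g, h) * Real.exp (-(2 * l₁) * g))
              * Real.exp (-(2 * l₂) * h))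
          + (2 * (δ₁ - δ₂)) * ((∫ g in Set.Ioi (0:ℝ), pg (g, h) * Real.exp (-(2 * l₁) * g))
              * Real.exp (-(2 * l₂) * h))
          + (2 * (δ₂ - δ₃)) * ((∫ g in Set.Ioi (0:ℝ), ph (g, h) * Real.exp (-(2 * l₁) * g))
              * Real.exp (-(2 * l₂) * h)) from
      funext fun h => by rw [hin h]; ring]
    have k2 : Integrable (fun h =>
        (∫ g in Set.Ioi (0:ℝ), qgg (g, h) * Real.exp (-(2 * l₁) * g)) * Real.exp (-(2 * l₂) * h)
        + (∫ g in Set.Ioi (0:ℝ), qhh (g, h) * Real.exp (-(2 * l₁) * g)) * Real.exp (-(2 * l₂) * h))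
        (volume.restrict (Set.Ioi 0)) := mqgg.add mqhh
    have k3 : Integrable (fun h =>
        (∫ g in Set.Ioi (0:ℝ), qgg (g, h) * Real.exp (-(2 * l₁) * g)) * Real.exp (-(2 * l₂) * h)
        + (∫ g in Set.Ioi (0:ℝ), qhh (g, h) * Real.exp (-(2 * l₁) * g)) * Real.exp (-(2 * l₂) * h)
        + (-2) * ((∫ g in Set.Ioi (0:ℝ), qgh (g, h) * Real.exp (-(2 * l₁) * g))
            * Real.exp (-(2 * l₂) * h))) (volume.restrict (Set.Ioi 0)) :=
      k2.add (mqgh.const_mul (-2))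
    have k4 : Integrable (fun h =>
        (∫ g in Set.Ioi (0:ℝ), qgg (g, h) * Real.exp (-(2 * l₁) * g)) * Real.exp (-(2 * l₂) * h)
        + (∫ g in Set.Ioi (0:ℝ), qhh (g, h) * Real.exp (-(2 * l₁) * g)) * Real.exp (-(2 * l₂) * h)
        + (-2) * ((∫ g in Set.Ioi (0:ℝ), qgh (g, h) * Real.exp (-(2 * l₁) * g))
            * Real.exp (-(2 * l₂) * h))
        + (2 * (δ₁ - δ₂)) * ((∫ g in Set.Ioi (0:ℝ), pg (g, h) * Real.exp (-(2 * l₁) * g))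
            * Real.exp (-(2 * l₂) * h))) (volume.restrict (Set.Ioi 0)) :=
      k3.add (mpg.const_mul (2 * (δ₁ - δ₂)))
    rw [MeasureTheory.integral_add k4 (mph.const_mul (2 * (δ₂ - δ₃))),
      MeasureTheory.integral_add k3 (mpg.const_mul (2 * (δ₁ - δ₂))),
      MeasureTheory.integral_add k2 (mqgh.const_mul (-2)),
      MeasureTheory.integral_add mqgg mqhh,
      MeasureTheory.integral_const_mul, MeasureTheory.integral_const_mul,
      MeasureTheory.integral_const_mul]
  -- splits of the boundary integrals
  have hT2 : (∫ h in Set.Ioi (0:ℝ),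
        (pg (0, h) - 1 / 2 * ph (0, h)) * Real.exp (-(2 * l₂) * h))
      = (∫ h in Set.Ioi (0:ℝ), pg (0, h) * Real.exp (-(2 * l₂) * h))
        - (1 / 2) * (∫ h in Set.Ioi (0:ℝ), ph (0, h) * Real.exp (-(2 * l₂) * h)) := by
    rw [show (fun h => (pg (0, h) - 1 / 2 * ph (0, h)) * Real.exp (-(2 * l₂) * h))
        = fun h => pg (0, h) * Real.exp (-(2 * l₂) * h)
          - (1 / 2) * (ph (0, h) * Real.exp (-(2 * l₂) * h)) from funext fun h => by ring,
      MeasureTheory.integral_sub ig1 (ig2.const_mul (1 / 2)), MeasureTheory.integral_const_mul]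
  have hT3 : (∫ g in Set.Ioi (0:ℝ),
        (ph (g, 0) - 3 / 2 * pg (g, 0)) * Real.exp (-(2 * l₁) * g))
      = (∫ g in Set.Ioi (0:ℝ), ph (g, 0) * Real.exp (-(2 * l₁) * g))
        - (3 / 2) * (∫ g in Set.Ioi (0:ℝ), pg (g, 0) * Real.exp (-(2 * l₁) * g)) := by
    rw [show (fun g => (ph (g, 0) - 3 / 2 * pg (g, 0)) * Real.exp (-(2 * l₁) * g))
        = fun g => ph (g, 0) * Real.exp (-(2 * l₁) * g)
          - (3 / 2) * (pg (g, 0) * Real.exp (-(2 * l₁) * g)) from funext fun g => by ring,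
      MeasureTheory.integral_sub ig4 (ig3.const_mul (3 / 2)), MeasureTheory.integral_const_mul]
  -- integration by parts relations
  have R1 : (∫ h in Set.Ioi (0:ℝ),
        (∫ g in Set.Ioi (0:ℝ), qgg (g, h) * Real.exp (-(2 * l₁) * g)) * Real.exp (-(2 * l₂) * h))
      = 2 * l₁ * (∫ h in Set.Ioi (0:ℝ),
          (∫ g in Set.Ioi (0:ℝ), pg (g, h) * Real.exp (-(2 * l₁) * g)) * Real.exp (-(2 * l₂) * h))
        - ∫ h in Set.Ioi (0:ℝ), pg (0, h) * Real.exp (-(2 * l₂) * h) :=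
    aux_outer h2l1 h2l2 hcpg hcqgg hbpg hbqgg hDgPg
  have R3 : (∫ h in Set.Ioi (0:ℝ),
        (∫ g in Set.Ioi (0:ℝ), qgh (g, h) * Real.exp (-(2 * l₁) * g)) * Real.exp (-(2 * l₂) * h))
      = 2 * l₁ * (∫ h in Set.Ioi (0:ℝ),
          (∫ g in Set.Ioi (0:ℝ), ph (g, h) * Real.exp (-(2 * l₁) * g)) * Real.exp (-(2 * l₂) * h))
        - ∫ h in Set.Ioi (0:ℝ), ph (0, h) * Real.exp (-(2 * l₂) * h) :=
    aux_outer h2l1 h2l2 hcph hcqgh hbph hbqgh hDgPh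
  have RQhh : (∫ h in Set.Ioi (0:ℝ),
        (∫ g in Set.Ioi (0:ℝ), qhh (g, h) * Real.exp (-(2 * l₁) * g)) * Real.exp (-(2 * l₂) * h))
      = 2 * l₂ * (∫ h in Set.Ioi (0:ℝ),
          (∫ g in Set.Ioi (0:ℝ), ph (g, h) * Real.exp (-(2 * l₁) * g)) * Real.exp (-(2 * l₂) * h))
        - ∫ g in Set.Ioi (0:ℝ), ph (g, 0) * Real.exp (-(2 * l₁) * g) := by
    rw [aux_swap h2l1 h2l2 hcqhh hbqhh, aux_swap h2l1 h2l2 hcph hbph]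
    exact aux_outer h2l2 h2l1
      (hcph.comp (continuous_snd.prodMk continuous_fst))
      (hcqhh.comp (continuous_snd.prodMk continuous_fst))
      (fun p => hbph (p.2, p.1)) (fun p => hbqhh (p.2, p.1))
      (fun p => hDhPh (p.2, p.1))
  have R2 : (∫ h in Set.Ioi (0:ℝ),
        (∫ g in Set.Ioi (0:ℝ), pg (g, h) * Real.exp (-(2 * l₁) * g)) * Real.exp (-(2 * l₂) * h))
      = 2 * l₁ * (∫ h in Set.Ioi (0:ℝ),
          (∫ g in Set.Ioi (0:ℝ), f (g, h) * Real.exp (-(2 * l₁) * g)) * Real.exp (-(2 * l₂) * h))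
        - ∫ h in Set.Ioi (0:ℝ), f (0, h) * Real.exp (-(2 * l₂) * h) :=
    aux_outer h2l1 h2l2 hcf hcpg hbf hbpg hDg
  have RPh : (∫ h in Set.Ioi (0:ℝ),
        (∫ g in Set.Ioi (0:ℝ), ph (g, h) * Real.exp (-(2 * l₁) * g)) * Real.exp (-(2 * l₂) * h))
      = 2 * l₂ * (∫ h in Set.Ioi (0:ℝ),
          (∫ g in Set.Ioi (0:ℝ), f (g, h) * Real.exp (-(2 * l₁) * g)) * Real.exp (-(2 * l₂) * h))
        - ∫ g in Set.Ioi (0:ℝ), f (g, 0) * Real.exp (-(2 * l₁) * g) := by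
    rw [aux_swap h2l1 h2l2 hcph hbph, aux_swap h2l1 h2l2 hcf hbf]
    exact aux_outer h2l2 h2l1
      (hcf.comp (continuous_snd.prodMk continuous_fst))
      (hcph.comp (continuous_snd.prodMk continuous_fst))
      (fun p => hbf (p.2, p.1)) (fun p => hbph (p.2, p.1))
      (fun p => hDh (p.2, p.1))
  have R7 : (∫ h in Set.Ioi (0:ℝ), ph (0, h) * Real.exp (-(2 * l₂) * h))
      = 2 * l₂ * (∫ h in Set.Ioi (0:ℝ), f (0, h) * Real.exp (-(2 * l₂) * h)) - f (0, 0) :=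
    aux_ibp h2l2 (fun x => hDh (0, x))
      (hcph.comp (continuous_const.prodMk continuous_id))
      (fun x => hbf (0, x)) (fun x => hbph (0, x))
  have R8 : (∫ g in Set.Ioi (0:ℝ), pg (g, 0) * Real.exp (-(2 * l₁) * g))
      = 2 * l₁ * (∫ g in Set.Ioi (0:ℝ), f (g, 0) * Real.exp (-(2 * l₁) * g)) - f (0, 0) :=
    aux_ibp h2l1 (fun x => hDg (x, 0))
      (hcpg.comp (continuous_id.prodMk continuous_const))
      (fun x => hbf (x, 0)) (fun x => hbpg (x, 0))
  have ha : 2 * (δ₁ - δ₂) = 3 * l₂ - 2 * l₁ := by rw [hl₁, hl₂]; ring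
  have hb2 : 2 * (δ₂ - δ₃) = l₁ - 2 * l₂ := by rw [hl₁, hl₂]; ring
  rw [hT1, hT2, hT3, ha, hb2, R1, R3, RQhh, R2, RPh, R7, R8]
  ring
end

section
/- Let λ > 0 and let π and π′ be Borel probability measures on [0,∞)², with Laplace transforms π̂(α₁,α₂) := ∫ e^{−α₁g − α₂h} π(dg,dh) and π̂′ defined likewise. Suppose that both π̂ and π̂′ satisfy, for every (α₁,α₂) ∈ [0,∞)² with (α₁,α₂) ≠ (0,0), the functional equation F(α₁,α₂) = λ·[(2α₁−α₂)·F(α₂,α₂) + (2α₂−α₁)·F(α₁,α₁)] / ((α₁−α₂)² + λ(α₁+α₂)), and suppose π̂(α,α) = π̂′(α,α) for every α ≥ 0. Then π = π′. -/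
open MeasureTheory

/-- The Laplace transform of a measure on the plane, evaluated at `(α₁, α₂)`. -/
noncomputable def laplaceTransform2D (μ : Measure (ℝ × ℝ)) (α₁ α₂ : ℝ) : ℝ :=
  ∫ p, Real.exp (-(α₁ * p.1) - α₂ * p.2) ∂μ

namespace JLDS

/-- The unit square, a compact subset of the plane. -/
def K : Set (ℝ × ℝ) := Set.Icc (0, 0) (1, 1)

instance : CompactSpace K := isCompact_iff_compactSpace.mp isCompact_Icc

/-- The map `(x, y) ↦ (e^{-x⁺}, e^{-y⁺})` into the unit square. -/
noncomputable def T (z : ℝ × ℝ) : K :=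
  ⟨(Real.exp (-(max z.1 0)), Real.exp (-(max z.2 0))), by
    constructor <;> constructor <;>
      simp [Real.exp_nonneg, Real.exp_le_one_iff, le_max_right, neg_nonpos] ⟩

lemma continuous_T : Continuous T := by
  apply Continuous.subtype_mk
  fun_prop

/-- An (a.e. on the quadrant) inverse of `T`. -/
noncomputable def Sinv (p : K) : ℝ × ℝ := (-Real.log (p : ℝ × ℝ).1, -Real.log (p : ℝ × ℝ).2)

lemma measurable_Sinv : Measurable Sinv := by
  have h1 : Measurable fun p : K => (p : ℝ × ℝ).1 := by fun_prop
  have h2 : Measurable fun p : K => (p : ℝ × ℝ).2 := by fun_prop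
  exact ((Real.measurable_log.comp h1).neg).prod ((Real.measurable_log.comp h2).neg)

lemma Sinv_T {z : ℝ × ℝ} (h : z ∈ Set.Ici (0:ℝ) ×ˢ Set.Ici (0:ℝ)) : Sinv (T z) = z := by
  obtain ⟨h1, h2⟩ := h
  simp only [Sinv, T, Real.log_exp]
  rw [max_eq_left h1, max_eq_left h2]
  simp

/-- Coordinate functions on the unit square. -/
def fstK : C(K, ℝ) := ⟨fun p => (p : ℝ × ℝ).1, by fun_prop⟩
def sndK : C(K, ℝ) := ⟨fun p => (p : ℝ × ℝ).2, by fun_prop⟩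

lemma sep : (Algebra.adjoin ℝ {fstK, sndK} : Subalgebra ℝ C(K, ℝ)).SeparatesPoints := by
  intro x y hxy
  have : (x : ℝ × ℝ).1 ≠ (y : ℝ × ℝ).1 ∨ (x : ℝ × ℝ).2 ≠ (y : ℝ × ℝ).2 := by
    by_contra h
    push_neg at h
    exact hxy (Subtype.ext (Prod.ext h.1 h.2))
  rcases this with h | h
  · exact ⟨fstK, ⟨fstK, Algebra.subset_adjoin (by simp), rfl⟩, h⟩
  · exact ⟨sndK, ⟨sndK, Algebra.subset_adjoin (by simp [sndK, fstK]), rfl⟩, h⟩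

lemma dense_adjoin :
    (Algebra.adjoin ℝ {fstK, sndK} : Subalgebra ℝ C(K, ℝ)).topologicalClosure = ⊤ :=
  ContinuousMap.subalgebra_topologicalClosure_eq_top_of_separatesPoints _ sep

lemma integrable_cm (μ : Measure K) [IsFiniteMeasure μ] (f : C(K, ℝ)) : Integrable f μ :=
  (BoundedContinuousFunction.mkOfCompact f).integrable μ

lemma continuous_integral_cm (μ : Measure K) [IsFiniteMeasure μ] :
    Continuous fun f : C(K, ℝ) => ∫ x, f x ∂μ := by
  have : LipschitzWith (μ Set.univ).toNNReal (fun f : C(K, ℝ) => ∫ x, f x ∂μ) := by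
    apply LipschitzWith.of_dist_le_mul
    intro f g
    rw [Real.dist_eq, ← integral_sub (integrable_cm μ f) (integrable_cm μ g)]
    have := BoundedContinuousFunction.norm_integral_le_mul_norm μ
      (BoundedContinuousFunction.mkOfCompact (f - g))
    calc ‖∫ x, (f - g) x ∂μ‖ = ‖∫ x, BoundedContinuousFunction.mkOfCompact (f - g) x ∂μ‖ := rfl
      _ ≤ (μ Set.univ).toReal * ‖BoundedContinuousFunction.mkOfCompact (f - g)‖ := this
      _ = (μ Set.univ).toNNReal * dist f g := by
          rw [BoundedContinuousFunction.norm_mkOfCompact, dist_eq_norm]; rfl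
  exact this.continuous

lemma ae_quadrant (ρ : Measure (ℝ × ℝ))
    (hs : ρ ((Set.Ici (0 : ℝ) ×ˢ Set.Ici (0 : ℝ))ᶜ) = 0) :
    ∀ᵐ z ∂ρ, z ∈ Set.Ici (0 : ℝ) ×ˢ Set.Ici (0 : ℝ) := by
  rw [ae_iff]
  convert hs using 2
  rfl

lemma integral_monomial (ρ : Measure (ℝ × ℝ)) [IsProbabilityMeasure ρ]
    (hs : ρ ((Set.Ici (0 : ℝ) ×ˢ Set.Ici (0 : ℝ))ᶜ) = 0) (m n : ℕ) :
    ∫ p, (fstK ^ m * sndK ^ n : C(K, ℝ)) p ∂(ρ.map T) = laplaceTransform2D ρ m n := by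
  rw [integral_map continuous_T.aemeasurable
    (fstK ^ m * sndK ^ n : C(K, ℝ)).continuous.aestronglyMeasurable]
  refine integral_congr_ae ((ae_quadrant ρ hs).mono fun z hz => ?_)
  obtain ⟨h1, h2⟩ := hz
  simp only [fstK, sndK, T, ContinuousMap.mul_apply, ContinuousMap.pow_apply,
    ContinuousMap.coe_mk, max_eq_left (Set.mem_Ici.mp h1), max_eq_left (Set.mem_Ici.mp h2)]
  rw [← Real.exp_nat_mul, ← Real.exp_nat_mul, ← Real.exp_add]
  ring_nf

lemma map_Sinv_map_T (ρ : Measure (ℝ × ℝ))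
    (hs : ρ ((Set.Ici (0 : ℝ) ×ˢ Set.Ici (0 : ℝ))ᶜ) = 0) :
    (ρ.map T).map Sinv = ρ := by
  rw [Measure.map_map measurable_Sinv continuous_T.measurable]
  have h : Sinv ∘ T =ᵐ[ρ] id := (ae_quadrant ρ hs).mono fun z hz => Sinv_T hz
  rw [Measure.map_congr h, Measure.map_id]

end JLDS

open JLDS in
/-- In the symmetric case, the functional equation satisfied by the Laplace transform
of the invariant law of the gaps determines the joint law from the law of the sum:
two probability measures on `[0,∞)²` whose Laplace transforms both satisfy the
functional equation and agree on the diagonal must coincide. -/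
theorem joint_law_determined_by_sum
    (lam : ℝ) (hlam : 0 < lam)
    (π π' : Measure (ℝ × ℝ))
    [IsProbabilityMeasure π] [IsProbabilityMeasure π']
    (hsupp : π ((Set.Ici (0 : ℝ) ×ˢ Set.Ici (0 : ℝ))ᶜ) = 0)
    (hsupp' : π' ((Set.Ici (0 : ℝ) ×ˢ Set.Ici (0 : ℝ))ᶜ) = 0)
    (hfe : ∀ α₁ α₂ : ℝ, 0 ≤ α₁ → 0 ≤ α₂ → ¬(α₁ = 0 ∧ α₂ = 0) →
      laplaceTransform2D π α₁ α₂ =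
        lam * ((2 * α₁ - α₂) * laplaceTransform2D π α₂ α₂
                + (2 * α₂ - α₁) * laplaceTransform2D π α₁ α₁)
          / ((α₁ - α₂) ^ 2 + lam * (α₁ + α₂)))
    (hfe' : ∀ α₁ α₂ : ℝ, 0 ≤ α₁ → 0 ≤ α₂ → ¬(α₁ = 0 ∧ α₂ = 0) →
      laplaceTransform2D π' α₁ α₂ =
        lam * ((2 * α₁ - α₂) * laplaceTransform2D π' α₂ α₂
                + (2 * α₂ - α₁) * laplaceTransform2D π' α₁ α₁)
          / ((α₁ - α₂) ^ 2 + lam * (α₁ + α₂)))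
    (hdiag : ∀ α ≥ (0 : ℝ), laplaceTransform2D π α α = laplaceTransform2D π' α α) :
    π = π' := by
  -- Step 1: the Laplace transforms agree everywhere on the nonnegative quadrant.
  have hL : ∀ α₁ α₂ : ℝ, 0 ≤ α₁ → 0 ≤ α₂ →
      laplaceTransform2D π α₁ α₂ = laplaceTransform2D π' α₁ α₂ := by
    intro α₁ α₂ h1 h2
    by_cases h0 : α₁ = 0 ∧ α₂ = 0
    · obtain ⟨rfl, rfl⟩ := h0
      simp [laplaceTransform2D]
    · rw [hfe α₁ α₂ h1 h2 h0, hfe' α₁ α₂ h1 h2 h0, hdiag α₁ h1, hdiag α₂ h2]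
  -- Step 2: push both measures forward to the unit square.
  set μ : Measure K := π.map T with hμdef
  set μ' : Measure K := π'.map T with hμ'def
  have hTm : AEMeasurable T π := continuous_T.aemeasurable
  have hTm' : AEMeasurable T π' := continuous_T.aemeasurable
  haveI : IsProbabilityMeasure μ := Measure.isProbabilityMeasure_map hTm
  haveI : IsProbabilityMeasure μ' := Measure.isProbabilityMeasure_map hTm'
  -- Step 3: integrals of all continuous functions on the square agree.
  have key : ∀ f : C(K, ℝ), ∫ x, f x ∂μ = ∫ x, f x ∂μ' := by
    have hmono : ∀ g ∈ Submonoid.closure ({fstK, sndK} : Set C(K, ℝ)),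
        ∃ m n : ℕ, g = fstK ^ m * sndK ^ n := by
      intro g hg
      induction hg using Submonoid.closure_induction with
      | mem x hx =>
        rcases hx with rfl | rfl
        · exact ⟨1, 0, by simp⟩
        · exact ⟨0, 1, by simp⟩
      | one => exact ⟨0, 0, by simp⟩
      | mul x y hx hy ihx ihy =>
        obtain ⟨m, n, rfl⟩ := ihx
        obtain ⟨m', n', rfl⟩ := ihy
        refine ⟨m + m', n + n', ?_⟩
        rw [pow_add, pow_add]
        ring
    have hspan : ∀ f ∈ Submodule.span ℝ
        ((Submonoid.closure ({fstK, sndK} : Set C(K, ℝ)) : Set C(K, ℝ))),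
        ∫ x, f x ∂μ = ∫ x, f x ∂μ' := by
      intro f hf
      induction hf using Submodule.span_induction with
      | mem g hg =>
        obtain ⟨m, n, rfl⟩ := hmono g hg
        rw [hμdef, hμ'def, integral_monomial π hsupp, integral_monomial π' hsupp',
          hL m n (Nat.cast_nonneg m) (Nat.cast_nonneg n)]
      | zero => simp
      | add x y hx hy ihx ihy =>
        simp only [ContinuousMap.add_apply]
        rw [integral_add (integrable_cm μ x) (integrable_cm μ y),
          integral_add (integrable_cm μ' x) (integrable_cm μ' y), ihx, ihy]
      | smul a x hx ihx =>
        simp only [ContinuousMap.smul_apply, smul_eq_mul]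
        rw [integral_const_mul, integral_const_mul, ihx]
    have hA : ∀ f ∈ (Algebra.adjoin ℝ ({fstK, sndK} : Set C(K, ℝ))),
        ∫ x, f x ∂μ = ∫ x, f x ∂μ' := by
      intro f hf
      exact hspan f (by rw [← Algebra.adjoin_eq_span]; exact hf)
    intro f
    have hfc : f ∈ closure ((Algebra.adjoin ℝ ({fstK, sndK} : Set C(K, ℝ)) : Subalgebra ℝ C(K, ℝ)) :
        Set C(K, ℝ)) := by
      have : f ∈ (Algebra.adjoin ℝ ({fstK, sndK} : Set C(K, ℝ))).topologicalClosure := by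
        rw [dense_adjoin]; trivial
      exact this
    exact Set.EqOn.closure hA (continuous_integral_cm μ) (continuous_integral_cm μ') hfc
  -- Step 4: the pushforward measures coincide.
  have hμμ' : μ = μ' := by
    apply ext_of_forall_lintegral_eq_of_IsFiniteMeasure
    intro f
    set g : C(K, ℝ) := ⟨fun x => (f x : ℝ), by fun_prop⟩ with hg
    have hint := key g
    have h1 := BoundedContinuousFunction.toReal_lintegral_coe_eq_integral f μ
    have h2 := BoundedContinuousFunction.toReal_lintegral_coe_eq_integral f μ'
    have : (∫⁻ x, (f x : ENNReal) ∂μ).toReal = (∫⁻ x, (f x : ENNReal) ∂μ').toReal := by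
      rw [h1, h2]; exact hint
    exact (ENNReal.toReal_eq_toReal_iff'
      (BoundedContinuousFunction.lintegral_lt_top_of_nnreal μ f).ne
      (BoundedContinuousFunction.lintegral_lt_top_of_nnreal μ' f).ne).mp this
  -- Step 5: pull back.
  calc π = μ.map Sinv := (map_Sinv_map_T π hsupp).symm
    _ = μ'.map Sinv := by rw [hμμ']
    _ = π' := map_Sinv_map_T π' hsupp'
end
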